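/- arXiv:math-ph/0507019 — 16 statements merged into one kernel-verified Lean document; each statement's English description precedes it below -/
import Mathlib

section
/- Let H be a complex Hilbert space containing two linearly independent vectors (i.e. of dimension at least 2), and let L(H) be the lattice of closed subspaces of H. Let S be a presheaf of nonempty sets on L(H), i.e. to each U ∈ L(H) is assigned a nonempty set S(U) and to each pair U ⊆ V a restriction map ρ_U^V : S(V) → S(U) with ρ_U^U = id and ρ_U^V ∘ ρ_V^W = ρ_U^W for U ⊆ V ⊆ W. Assume S is complete: whenever U is the supremum (closure of the span of the union) of a family (U_i)_{i∈I} in L(H) and elements f_i ∈ S(U_i) satisfy ρ_{U_i∩U_j}^{U_i}(f_i) = ρ_{U_i∩U_j}^{U_j}(f_j) whenever U_i ∩ U_j ≠ 0, then there is exactly one f ∈ S(U) with ρ_{U_i}^{U}(f) = f_i for all i. Then S(U) is a singleton for every U ∈ L(H). -/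
/-!
A section is determined by its restrictions to a cover, and sections over pairwise disjoint
pieces always glue. So if `A`, `B`, `C` are pairwise disjoint and `C ≤ closure (A ⊔ B)`, then
every `c ∈ S C`, together with fixed `a ∈ S A` and `b ∈ S B`, is the restriction of the one
section over `closure (A ⊔ B)` determined by `a` and `b`; hence `S C` has at most one element.
For orthonormal families `u ⊥ v` the closed spans of `u`, `v` and `u + v` form such a triple.
A Hilbert basis of `U` splits into two halves of equal cardinality and at most one leftover
vector, which is paired with a unit vector orthogonal to it (this is where `dim H ≥ 2` enters).
So `U` is the closed span of three subspaces with subsingleton sections, and `S U` is a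
subsingleton by uniqueness of gluing. (Covering `U` by all its lines is not available: the
index type of a cover lives in an arbitrary universe, so only finite covers are usable.)
-/

/-- The lattice `L(H)` of closed (linear) subspaces of a Hilbert space `H`. -/
def ClosedSubspace (H : Type*) [NormedAddCommGroup H] [InnerProductSpace ℂ H] : Type _ :=
  {U : Submodule ℂ H // IsClosed (U : Set H)}

/-- The meet (intersection) of two closed subspaces. -/
def ClosedSubspace.inf {H : Type*} [NormedAddCommGroup H] [InnerProductSpace ℂ H]
    (U V : ClosedSubspace H) : ClosedSubspace H :=
  ⟨U.1 ⊓ V.1, by rw [Submodule.coe_inf]; exact U.2.inter V.2⟩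

open Set Submodule
open scoped InnerProductSpace

universe u w

namespace Submodule

variable {𝕜 E : Type*} [RCLike 𝕜] [NormedAddCommGroup E] [InnerProductSpace 𝕜 E]

theorem IsOrtho.topologicalClosure_left {U V : Submodule 𝕜 E} (h : U ⟂ V) :
    U.topologicalClosure ⟂ V :=
  isOrtho_iff_le.2 <| topologicalClosure_minimal _ (isOrtho_iff_le.1 h) V.isClosed_orthogonal

theorem IsOrtho.topologicalClosure {U V : Submodule 𝕜 E} (h : U ⟂ V) :
    U.topologicalClosure ⟂ V.topologicalClosure :=
  (h.topologicalClosure_left.symm.topologicalClosure_left).symm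

theorem inf_eq_bot_of_isOrtho_of_le_topologicalClosure {X Y Z W : Submodule 𝕜 E} (hXY : X ⟂ Y)
    (hZW : Z ⟂ W) (hX : X ≤ (W ⊔ Y).topologicalClosure) : X ⊓ Z = ⊥ := by
  have hXZ : X ⊓ Z ≤ Xᗮ := calc
    X ⊓ Z ≤ Yᗮ ⊓ Wᗮ := inf_le_inf (isOrtho_iff_le.1 hXY) (isOrtho_iff_le.1 hZW)
    _ = (W ⊔ Y).topologicalClosureᗮ := by rw [orthogonal_closure, ← inf_orthogonal, inf_comm]
    _ ≤ Xᗮ := orthogonal_le hX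
  exact eq_bot_iff.2 <| (le_inf inf_le_left hXZ).trans (inf_orthogonal_eq_bot X).le

section OrthonormalPair

variable {β : Type*} {u v : β → E}

theorem isOrtho_span_range_of_inner_eq_zero (huv : ∀ i j, ⟪u i, v j⟫_𝕜 = 0) :
    span 𝕜 (range u) ⟂ span 𝕜 (range v) :=
  isOrtho_span.2 <| by rintro _ ⟨i, rfl⟩ _ ⟨j, rfl⟩; exact huv i j

theorem isOrtho_span_range_add_sub (hu : Orthonormal 𝕜 u) (hv : Orthonormal 𝕜 v)
    (huv : ∀ i j, ⟪u i, v j⟫_𝕜 = 0) : span 𝕜 (range (u + v)) ⟂ span 𝕜 (range (u - v)) := by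
  refine isOrtho_span_range_of_inner_eq_zero fun i j => ?_
  classical
  have hvu : ⟪v i, u j⟫_𝕜 = 0 := inner_eq_zero_symm.1 (huv j i)
  simp [inner_add_left, inner_sub_right, huv, hvu, orthonormal_iff_ite.1 hu,
    orthonormal_iff_ite.1 hv]

theorem topologicalClosure_span_range_inf_of_inner_eq_zero (huv : ∀ i j, ⟪u i, v j⟫_𝕜 = 0) :
    (span 𝕜 (range u)).topologicalClosure ⊓ (span 𝕜 (range v)).topologicalClosure = ⊥ :=
  (isOrtho_span_range_of_inner_eq_zero huv).topologicalClosure.disjoint.eq_bot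

theorem topologicalClosure_span_range_inf_add_of_orthonormal (hu : Orthonormal 𝕜 u)
    (hv : Orthonormal 𝕜 v) (huv : ∀ i j, ⟪u i, v j⟫_𝕜 = 0) :
    (span 𝕜 (range u)).topologicalClosure ⊓ (span 𝕜 (range (u + v))).topologicalClosure = ⊥ := by
  refine inf_eq_bot_of_isOrtho_of_le_topologicalClosure
    (isOrtho_span_range_of_inner_eq_zero huv).topologicalClosure_left
    (isOrtho_span_range_add_sub hu hv huv).topologicalClosure_left
    (topologicalClosure_mono <| span_le.2 ?_)
  rintro _ ⟨i, rfl⟩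
  have hw : (u - v) i ∈ span 𝕜 (range (u - v)) := subset_span (mem_range_self i)
  have hv : v i ∈ span 𝕜 (range v) := subset_span (mem_range_self i)
  simpa using add_mem (mem_sup_left hw) (mem_sup_right hv)

theorem topologicalClosure_span_range_le_sup_add :
    (span 𝕜 (range u)).topologicalClosure ≤
      ((span 𝕜 (range v)).topologicalClosure ⊔
        (span 𝕜 (range (u + v))).topologicalClosure).topologicalClosure := by
  refine topologicalClosure_mono <| (span_le.2 ?_).trans <|
    sup_le_sup (le_topologicalClosure _) (le_topologicalClosure _)
  rintro _ ⟨i, rfl⟩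
  have hw : (u + v) i ∈ span 𝕜 (range (u + v)) := subset_span (mem_range_self i)
  have hv : v i ∈ span 𝕜 (range v) := subset_span (mem_range_self i)
  simpa using sub_mem (mem_sup_right hw) (mem_sup_left hv)

end OrthonormalPair

end Submodule

theorem exists_sum_self_sum_equiv (α : Type u) :
    ∃ (β γ : Type u), Subsingleton γ ∧ Nonempty ((β ⊕ β) ⊕ γ ≃ α) := by
  rcases finite_or_infinite α with hα | hα
  · have := Fintype.ofFinite α
    have : Subsingleton (Fin (Fintype.card α % 2)) := Fin.subsingleton_iff_le_one.2 (by omega)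
    refine ⟨ULift (Fin (Fintype.card α / 2)), ULift (Fin (Fintype.card α % 2)), inferInstance,
      ⟨Fintype.equivOfCardEq ?_⟩⟩
    simp only [Fintype.card_sum, Fintype.card_ulift, Fintype.card_fin]
    omega
  · have hcard : Cardinal.mk (α ⊕ α) = Cardinal.mk α := by
      simp [Cardinal.add_eq_self (Cardinal.aleph0_le_mk α)]
    exact ⟨α, PEmpty, inferInstance, ⟨(Equiv.sumEmpty _ _).trans (Cardinal.eq.1 hcard).some⟩⟩

section

variable {𝕜 : Type*} {E : Type u} [RCLike 𝕜] [NormedAddCommGroup E] [InnerProductSpace 𝕜 E]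

theorem exists_norm_eq_one_forall_inner_eq_zero (hdim : ∃ x y : E, LinearIndependent 𝕜 ![x, y])
    {γ : Type*} [Subsingleton γ] (r : γ → E) : ∃ f : E, ‖f‖ = 1 ∧ ∀ i, ⟪r i, f⟫_𝕜 = 0 := by
  set K := span 𝕜 (range r)
  have := FiniteDimensional.span_of_finite 𝕜 (finite_range r)
  have hK : K ≠ ⊤ := by
    intro hK
    obtain ⟨x, y, hxy⟩ := hdim
    have h2 := hxy.cardinal_lift_le_rank
    have h1 : Module.rank 𝕜 K ≤ 1 :=
      (rank_span_le _).trans (Cardinal.mk_le_one_iff_set_subsingleton.2 (subsingleton_range r))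
    rw [hK, rank_top] at h1
    have := h2.trans (Cardinal.lift_le.2 h1)
    simp at this
  obtain ⟨g, hg, hg0⟩ := exists_mem_ne_zero_of_ne_bot (mt orthogonal_eq_bot_iff.1 hK)
  exact ⟨(‖g‖⁻¹ : 𝕜) • g, norm_smul_inv_norm hg0, fun i =>
    inner_right_of_mem_orthogonal (subset_span (mem_range_self i)) (smul_mem _ _ hg)⟩

theorem exists_orthonormal_topologicalClosure_span_eq [CompleteSpace E] {U : Submodule 𝕜 E}
    (hU : IsClosed (U : Set E)) :
    ∃ (ι : Type u) (e : ι → E), Orthonormal 𝕜 e ∧ (span 𝕜 (range e)).topologicalClosure = U := by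
  have : CompleteSpace U := hU.completeSpace_coe
  obtain ⟨w, b, -⟩ := exists_hilbertBasis 𝕜 U
  refine ⟨w, U.subtypeₗᵢ ∘ b, b.orthonormal.comp_linearIsometry _, le_antisymm ?_ ?_⟩
  · exact topologicalClosure_minimal _ (span_le.2 (by rintro _ ⟨i, rfl⟩; exact (b i).2)) hU
  · have h := topologicalClosure_map U.subtypeL (span 𝕜 (range b))
    rw [b.dense_span] at h
    change map U.subtype ⊤ ≤ (map U.subtype (span 𝕜 (range b))).topologicalClosure at h
    rwa [map_subtype_top, map_span, ← range_comp] at h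

end

namespace ClosedSubspace

variable {H : Type*} [NormedAddCommGroup H] [InnerProductSpace ℂ H]

def topologicalClosure (p : Submodule ℂ H) : ClosedSubspace H :=
  ⟨p.topologicalClosure, p.isClosed_topologicalClosure⟩

theorem eq_topologicalClosure_iSup {I : Type*} {F : I → ClosedSubspace H} {U : ClosedSubspace H}
    (hle : ∀ i, (F i).1 ≤ U.1) (hU : U.1 ≤ (⨆ i, (F i).1).topologicalClosure) :
    U.1 = (⨆ i, (F i).1).topologicalClosure :=
  hU.antisymm (topologicalClosure_minimal _ (iSup_le hle) U.2)

section Presheaf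

variable {S : ClosedSubspace H → Type*} (ρ : ∀ U V : ClosedSubspace H, U.1 ≤ V.1 → S V → S U)

def RestrictionsCompose : Prop :=
  ∀ (U V W : ClosedSubspace H) (hUV : U.1 ≤ V.1) (hVW : V.1 ≤ W.1) (s : S W),
    ρ U V hUV (ρ V W hVW s) = ρ U W (le_trans hUV hVW) s

def HasUniqueGluing : Prop :=
  ∀ (I : Type w) (Ufam : I → ClosedSubspace H) (Usup : ClosedSubspace H),
    Usup.1 = (⨆ i, (Ufam i).1).topologicalClosure →
    ∀ hle : ∀ i, (Ufam i).1 ≤ Usup.1,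
    ∀ f : ∀ i, S (Ufam i),
    (∀ i j, (Ufam i).1 ⊓ (Ufam j).1 ≠ ⊥ →
      ρ ((Ufam i).inf (Ufam j)) (Ufam i) inf_le_left (f i) =
      ρ ((Ufam i).inf (Ufam j)) (Ufam j) inf_le_right (f j)) →
    ∃! g : S Usup, ∀ i, ρ (Ufam i) Usup (hle i) g = f i

variable {ρ} {I : Type w} {F : I → ClosedSubspace H} {U : ClosedSubspace H}

theorem eq_of_forall_restrict_eq (hcomp : RestrictionsCompose ρ) (hglue : HasUniqueGluing.{w} ρ)
    (hle : ∀ i, (F i).1 ≤ U.1) (hU : U.1 ≤ (⨆ i, (F i).1).topologicalClosure) {c d : S U}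
    (h : ∀ i, ρ (F i) U (hle i) c = ρ (F i) U (hle i) d) : c = d := by
  obtain ⟨g, -, hg⟩ := hglue I F U (eq_topologicalClosure_iSup hle hU) hle
    (fun i => ρ (F i) U (hle i) d) fun _ _ _ =>
      (hcomp _ _ _ _ _ d).trans (hcomp _ _ _ _ _ d).symm
  exact (hg c h).trans (hg d fun _ => rfl).symm

theorem subsingleton_of_forall_subsingleton (hcomp : RestrictionsCompose ρ)
    (hglue : HasUniqueGluing.{w} ρ) (hle : ∀ i, (F i).1 ≤ U.1)
    (hU : U.1 ≤ (⨆ i, (F i).1).topologicalClosure) (hF : ∀ i, Subsingleton (S (F i))) :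
    Subsingleton (S U) :=
  ⟨fun _ _ => eq_of_forall_restrict_eq hcomp hglue hle hU fun _ => Subsingleton.elim _ _⟩

theorem exists_glue_of_pairwise_disjoint (hglue : HasUniqueGluing.{w} ρ)
    (hle : ∀ i, (F i).1 ≤ U.1) (hU : U.1 ≤ (⨆ i, (F i).1).topologicalClosure)
    (hF : Pairwise fun i j => (F i).1 ⊓ (F j).1 = ⊥) (f : ∀ i, S (F i)) :
    ∃ g : S U, ∀ i, ρ (F i) U (hle i) g = f i := by
  refine (hglue I F U (eq_topologicalClosure_iSup hle hU) hle f fun i j hij => ?_).exists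
  obtain rfl : i = j := by_contra fun h => hij (hF h)
  rfl

theorem subsingleton_of_pairwise_disjoint (hne : ∀ U, Nonempty (S U))
    (hcomp : RestrictionsCompose ρ) (hglue : HasUniqueGluing.{w} ρ) {A B C : ClosedSubspace H}
    (hC : C.1 ≤ (A.1 ⊔ B.1).topologicalClosure) (hAB : A.1 ⊓ B.1 = ⊥) (hAC : A.1 ⊓ C.1 = ⊥)
    (hBC : B.1 ⊓ C.1 = ⊥) : Subsingleton (S C) := by
  obtain ⟨a⟩ := hne A
  obtain ⟨b⟩ := hne B
  set P := topologicalClosure (A.1 ⊔ B.1)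
  have hAP : A.1 ≤ P.1 := le_sup_left.trans (le_topologicalClosure _)
  have hBP : B.1 ≤ P.1 := le_sup_right.trans (le_topologicalClosure _)
  let F₃ : ULift.{w} (Fin 3) → ClosedSubspace H := fun i => ![A, B, C] i.down
  have hle₃ : ∀ i, (F₃ i).1 ≤ P.1 := by
    rintro ⟨i⟩; fin_cases i
    exacts [hAP, hBP, hC]
  have hglue₃ : ∀ c : S C, ∃ g : S P, ρ A P hAP g = a ∧ ρ B P hBP g = b ∧ ρ C P hC g = c := by
    intro c
    obtain ⟨g, hg⟩ := exists_glue_of_pairwise_disjoint hglue hle₃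
      (topologicalClosure_mono (sup_le (le_iSup (fun i => (F₃ i).1) ⟨0⟩)
        (le_iSup (fun i => (F₃ i).1) ⟨1⟩)))
      (by
        rintro ⟨i⟩ ⟨j⟩ hij
        fin_cases i <;> fin_cases j <;> simp_all [F₃, inf_comm])
      (fun | ⟨0⟩ => a | ⟨1⟩ => b | ⟨2⟩ => c)
    exact ⟨g, hg ⟨0⟩, hg ⟨1⟩, hg ⟨2⟩⟩
  let F₂ : ULift.{w} (Fin 2) → ClosedSubspace H := fun i => ![A, B] i.down
  have hle₂ : ∀ i, (F₂ i).1 ≤ P.1 := by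
    rintro ⟨i⟩; fin_cases i
    exacts [hAP, hBP]
  refine ⟨fun c d => ?_⟩
  obtain ⟨g, hga, hgb, rfl⟩ := hglue₃ c
  obtain ⟨g', hga', hgb', rfl⟩ := hglue₃ d
  congr 1
  refine eq_of_forall_restrict_eq hcomp hglue hle₂
    (topologicalClosure_mono (sup_le (le_iSup (fun i => (F₂ i).1) ⟨0⟩)
      (le_iSup (fun i => (F₂ i).1) ⟨1⟩))) ?_
  rintro ⟨i⟩; fin_cases i
  exacts [hga.trans hga'.symm, hgb.trans hgb'.symm]

theorem subsingleton_topologicalClosure_span_range (hne : ∀ U, Nonempty (S U))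
    (hcomp : RestrictionsCompose ρ) (hglue : HasUniqueGluing.{w} ρ) {β : Type*} {u v : β → H}
    (hu : Orthonormal ℂ u) (hv : Orthonormal ℂ v) (huv : ∀ i j, ⟪u i, v j⟫_ℂ = 0) :
    Subsingleton (S (topologicalClosure (span ℂ (range u)))) := by
  have hvu : ∀ i j, ⟪v i, u j⟫_ℂ = 0 := fun i j => inner_eq_zero_symm.1 (huv j i)
  refine subsingleton_of_pairwise_disjoint hne hcomp hglue
    (A := topologicalClosure (span ℂ (range v))) (B := topologicalClosure (span ℂ (range (u + v))))
    topologicalClosure_span_range_le_sup_add ?_ ?_ ?_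
  · rw [add_comm u v]
    exact topologicalClosure_span_range_inf_add_of_orthonormal hv hu hvu
  · exact topologicalClosure_span_range_inf_of_inner_eq_zero hvu
  · rw [inf_comm]
    exact topologicalClosure_span_range_inf_add_of_orthonormal hu hv huv

theorem subsingleton_of_exists_linearIndependent_pair [CompleteSpace H]
    (hdim : ∃ x y : H, LinearIndependent ℂ ![x, y]) (hne : ∀ U, Nonempty (S U))
    (hcomp : RestrictionsCompose ρ) (hglue : HasUniqueGluing.{w} ρ) (U : ClosedSubspace H) :
    Subsingleton (S U) := by
  obtain ⟨ι, e, he, hU⟩ := exists_orthonormal_topologicalClosure_span_eq U.2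
  obtain ⟨β, γ, _, ⟨σ⟩⟩ := exists_sum_self_sum_equiv ι
  have he' : Orthonormal ℂ (e ∘ σ) := he.comp σ σ.injective
  let u := fun i => e (σ (.inl (.inl i)))
  let v := fun i => e (σ (.inl (.inr i)))
  let r := fun k => e (σ (.inr k))
  have hu : Orthonormal ℂ u := he'.comp _ (Sum.inl_injective.comp Sum.inl_injective)
  have hv : Orthonormal ℂ v := he'.comp _ (Sum.inl_injective.comp Sum.inr_injective)
  have hr : Orthonormal ℂ r := he'.comp _ Sum.inr_injective
  have huv : ∀ i j, ⟪u i, v j⟫_ℂ = 0 := fun i j => he'.2 (by simp)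
  have hvu : ∀ i j, ⟪v i, u j⟫_ℂ = 0 := fun i j => he'.2 (by simp)
  obtain ⟨f, hf, hrf⟩ := exists_norm_eq_one_forall_inner_eq_zero hdim r
  have hf' : Orthonormal ℂ fun _ : γ => f :=
    ⟨fun _ => hf, fun i j hij => (hij (Subsingleton.elim i j)).elim⟩
  let F : ULift.{w} (Fin 3) → ClosedSubspace H := fun i =>
    ![topologicalClosure (span ℂ (range u)), topologicalClosure (span ℂ (range v)),
      topologicalClosure (span ℂ (range r))] i.down
  refine subsingleton_of_forall_subsingleton hcomp hglue (F := F) ?_ ?_ ?_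
  · rw [← hU]
    rintro ⟨i⟩
    fin_cases i <;>
      exact topologicalClosure_mono (span_mono (range_subset_iff.2 fun _ => mem_range_self _))
  · rw [← hU]
    refine topologicalClosure_mono (span_le.2 ?_)
    rintro _ ⟨k, rfl⟩
    obtain ⟨(i | i) | i, rfl⟩ := σ.surjective k
    · exact le_iSup (fun i => (F i).1) ⟨0⟩ (le_topologicalClosure _ (subset_span ⟨i, rfl⟩))
    · exact le_iSup (fun i => (F i).1) ⟨1⟩ (le_topologicalClosure _ (subset_span ⟨i, rfl⟩))
    · exact le_iSup (fun i => (F i).1) ⟨2⟩ (le_topologicalClosure _ (subset_span ⟨i, rfl⟩))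
  · rintro ⟨i⟩
    fin_cases i
    exacts [subsingleton_topologicalClosure_span_range hne hcomp hglue hu hv huv,
      subsingleton_topologicalClosure_span_range hne hcomp hglue hv hu hvu,
      subsingleton_topologicalClosure_span_range hne hcomp hglue hr hf' fun i _ => hrf i]

end Presheaf

end ClosedSubspace

theorem stmt0_general {H : Type*} [NormedAddCommGroup H] [InnerProductSpace ℂ H]
    [CompleteSpace H]
    (hdim : ∃ x y : H, LinearIndependent ℂ ![x, y])
    (S : ClosedSubspace H → Type*)
    (hne : ∀ U : ClosedSubspace H, Nonempty (S U))
    (ρ : ∀ U V : ClosedSubspace H, U.1 ≤ V.1 → S V → S U)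
    (hcomp : ∀ (U V W : ClosedSubspace H) (hUV : U.1 ≤ V.1) (hVW : V.1 ≤ W.1)
      (s : S W), ρ U V hUV (ρ V W hVW s) = ρ U W (le_trans hUV hVW) s)
    (hsheaf : ∀ (I : Type*) (Ufam : I → ClosedSubspace H)
      (Usup : ClosedSubspace H),
      Usup.1 = (⨆ i, (Ufam i).1).topologicalClosure →
      ∀ hle : ∀ i, (Ufam i).1 ≤ Usup.1,
      ∀ f : ∀ i, S (Ufam i),
      (∀ i j, (Ufam i).1 ⊓ (Ufam j).1 ≠ ⊥ →
        ρ ((Ufam i).inf (Ufam j)) (Ufam i) inf_le_left (f i) =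
        ρ ((Ufam i).inf (Ufam j)) (Ufam j) inf_le_right (f j)) →
      ∃! g : S Usup, ∀ i, ρ (Ufam i) Usup (hle i) g = f i) :
    ∀ U : ClosedSubspace H, ∃ s : S U, ∀ t : S U, t = s := by
  intro U
  obtain ⟨s⟩ := hne U
  have := ClosedSubspace.subsingleton_of_exists_linearIndependent_pair hdim hne hcomp hsheaf U
  exact ⟨s, fun t => Subsingleton.elim t s⟩

/-- Any complete presheaf of nonempty sets on the lattice `L(H)` of closed
subspaces of a Hilbert space of dimension at least 2 is trivial: all its sets
are singletons.  Here `ρ` are the restriction maps of the presheaf (satisfying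
the identity and composition laws), and completeness says: whenever `Usup` is
the supremum (closure of the span of the union) of a family `Ufam` and the
local data `f i ∈ S (Ufam i)` agree on all nonzero intersections, there is a
unique `g ∈ S Usup` restricting to all the `f i`. -/
theorem stmt0 {H : Type*} [NormedAddCommGroup H] [InnerProductSpace ℂ H]
    [CompleteSpace H]
    (hdim : ∃ x y : H, LinearIndependent ℂ ![x, y])
    (S : ClosedSubspace H → Type*)
    (hne : ∀ U : ClosedSubspace H, Nonempty (S U))
    (ρ : ∀ U V : ClosedSubspace H, U.1 ≤ V.1 → S V → S U)
    (hid : ∀ (U : ClosedSubspace H) (h : U.1 ≤ U.1) (s : S U), ρ U U h s = s)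
    (hcomp : ∀ (U V W : ClosedSubspace H) (hUV : U.1 ≤ V.1) (hVW : V.1 ≤ W.1)
      (s : S W), ρ U V hUV (ρ V W hVW s) = ρ U W (le_trans hUV hVW) s)
    (hsheaf : ∀ (I : Type*) (Ufam : I → ClosedSubspace H)
      (Usup : ClosedSubspace H),
      Usup.1 = (⨆ i, (Ufam i).1).topologicalClosure →
      ∀ hle : ∀ i, (Ufam i).1 ≤ Usup.1,
      ∀ f : ∀ i, S (Ufam i),
      (∀ i j, (Ufam i).1 ⊓ (Ufam j).1 ≠ ⊥ →
        ρ ((Ufam i).inf (Ufam j)) (Ufam i) inf_le_left (f i) =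
        ρ ((Ufam i).inf (Ufam j)) (Ufam j) inf_le_right (f j)) →
      ∃! g : S Usup, ∀ i, ρ (Ufam i) Usup (hle i) g = f i) :
    ∀ U : ClosedSubspace H, ∃ s : S U, ∀ t : S U, t = s :=
  stmt0_general hdim S hne ρ hcomp hsheaf
end

section
/- Let H be a complex Hilbert space and let B be a quasipoint in the lattice L(H) of closed subspaces of H. Then B contains a nonzero finite-dimensional subspace if and only if there is a (necessarily unique) one-dimensional subspace ℂx (0 ≠ x ∈ H) such that B = {U ∈ L(H) | ℂx ⊆ U}. -/
/-- The zero subspace, as an element of `L(H)`. -/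
def zeroCS (H : Type*) [NormedAddCommGroup H] [InnerProductSpace ℂ H] :
    ClosedSubspace H :=
  ⟨⊥, by rw [Submodule.bot_coe]; exact isClosed_singleton⟩

/-- A quasipoint of `L(H)`: a nonempty set of closed subspaces not containing
the zero subspace, downward directed (for `U, V ∈ B` there is `W ∈ B` with
`W ⊆ U ∩ V`), and maximal among subsets with these properties. -/
def IsQuasipointCS {H : Type*} [NormedAddCommGroup H] [InnerProductSpace ℂ H]
    (B : Set (ClosedSubspace H)) : Prop :=
  B.Nonempty ∧ zeroCS H ∉ B ∧
  (∀ U ∈ B, ∀ V ∈ B, ∃ W ∈ B, W.1 ≤ U.1 ⊓ V.1) ∧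
  ∀ C : Set (ClosedSubspace H), zeroCS H ∉ C →
    (∀ U ∈ C, ∀ V ∈ C, ∃ W ∈ C, W.1 ≤ U.1 ⊓ V.1) → B ⊆ C → B = C

/-!
In a downward directed family of subspaces, a member `W` of least dimension among
those below a given finite-dimensional member lies below every other member `V`, since a member
below `W ⊓ V` must be `W` itself by dimension count. A nonzero `x ∈ W` then lies in every
member of `B`, so `B` is contained in the directed family of closed subspaces containing `ℂx`,
and maximality forces equality. Conversely `ℂx` itself is a finite-dimensional member.
-/

theorem Submodule.exists_le_of_directedOn_of_finiteDimensional {K V : Type*} [DivisionRing K]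
    [AddCommGroup V] [Module K V] {S : Set (Submodule K V)} (hS : DirectedOn (· ≥ ·) S)
    {U : Submodule K V} (hU : U ∈ S) [FiniteDimensional K U] :
    ∃ W ∈ S, ∀ V ∈ S, W ≤ V := by
  set T := {W ∈ S | W ≤ U}
  have hT : T.Nonempty := ⟨U, hU, le_rfl⟩
  set d := fun W : Submodule K V ↦ Module.finrank K W
  set W := Function.argminOn d T hT
  obtain ⟨hWS, hWU⟩ : W ∈ T := Function.argminOn_mem d T hT
  have : FiniteDimensional K W := Submodule.finiteDimensional_of_le hWU
  refine ⟨W, hWS, fun V hV ↦ ?_⟩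
  obtain ⟨W', hW'S, hW'W, hW'V⟩ := hS W hWS V hV
  have hW'T : W' ∈ T := ⟨hW'S, hW'W.trans hWU⟩
  have hW'_eq : W' = W := Submodule.eq_of_le_of_finrank_le hW'W
    (not_lt.mp (Function.not_lt_argminOn d T hW'T))
  exact hW'_eq ▸ hW'V

namespace ClosedSubspace

variable {H : Type*} [NormedAddCommGroup H] [InnerProductSpace ℂ H]

def line (x : H) : ClosedSubspace H :=
  ⟨ℂ ∙ x, Submodule.closed_of_finiteDimensional _⟩

theorem span_singleton_eq_of_setOf_eq {x y : H}
    (h : {U : ClosedSubspace H | ℂ ∙ x ≤ U.1} = {U : ClosedSubspace H | ℂ ∙ y ≤ U.1}) :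
    ℂ ∙ x = ℂ ∙ y := by
  have hx : line x ∈ {U : ClosedSubspace H | ℂ ∙ x ≤ U.1} := le_refl (ℂ ∙ x)
  have hy : line y ∈ {U : ClosedSubspace H | ℂ ∙ y ≤ U.1} := le_refl (ℂ ∙ y)
  rw [h] at hx
  rw [← h] at hy
  exact le_antisymm hy hx

end ClosedSubspace

namespace IsQuasipointCS

variable {H : Type*} [NormedAddCommGroup H] [InnerProductSpace ℂ H] {B : Set (ClosedSubspace H)}

theorem ne_bot (hB : IsQuasipointCS B) {U : ClosedSubspace H} (hU : U ∈ B) : U.1 ≠ ⊥ := by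
  intro h
  rw [show U = zeroCS H from Subtype.ext h] at hU
  exact hB.2.1 hU

theorem directedOn_image (hB : IsQuasipointCS B) : DirectedOn (· ≥ ·) (Subtype.val '' B) := by
  rintro _ ⟨U, hU, rfl⟩ _ ⟨V, hV, rfl⟩
  obtain ⟨W, hW, hWUV⟩ := hB.2.2.1 U hU V hV
  exact ⟨W.1, ⟨W, hW, rfl⟩, hWUV.trans inf_le_left, hWUV.trans inf_le_right⟩

theorem eq_setOf_span_singleton_le (hB : IsQuasipointCS B) {x : H} (hx : x ≠ 0)
    (hxB : ∀ U ∈ B, x ∈ U.1) : B = {U : ClosedSubspace H | ℂ ∙ x ≤ U.1} := by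
  refine hB.2.2.2 _ ?_ ?_ ?_
  · intro h
    exact hx ((Submodule.span_singleton_eq_bot (R := ℂ)).mp (le_bot_iff.mp h))
  · intro U hU V hV
    exact ⟨⟨U.1 ⊓ V.1, U.2.inter V.2⟩, (le_inf hU hV : ℂ ∙ x ≤ U.1 ⊓ V.1), le_rfl⟩
  · intro U hU
    exact (Submodule.span_singleton_le_iff_mem x U.1).mpr (hxB U hU)

end IsQuasipointCS

theorem stmt3_general {H : Type*} [NormedAddCommGroup H] [InnerProductSpace ℂ H]
    (B : Set (ClosedSubspace H)) (hB : IsQuasipointCS B) :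
    (∃ U ∈ B, U.1 ≠ ⊥ ∧ FiniteDimensional ℂ U.1) ↔
    ∃ x : H, x ≠ 0 ∧
      B = {U : ClosedSubspace H | Submodule.span ℂ {x} ≤ U.1} ∧
      ∀ y : H, y ≠ 0 → B = {U : ClosedSubspace H | Submodule.span ℂ {y} ≤ U.1} →
        Submodule.span ℂ {y} = Submodule.span ℂ {x} := by
  constructor
  · rintro ⟨U, hU, -, hUfin⟩
    obtain ⟨_, ⟨W, hW, rfl⟩, hW_least⟩ :=
      Submodule.exists_le_of_directedOn_of_finiteDimensional hB.directedOn_image ⟨U, hU, rfl⟩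
    obtain ⟨x, hxW, hx⟩ := Submodule.exists_mem_ne_zero_of_ne_bot (hB.ne_bot hW)
    have hBx := hB.eq_setOf_span_singleton_le hx fun V hV ↦ hW_least V.1 ⟨V, hV, rfl⟩ hxW
    exact ⟨x, hx, hBx, fun y _ hBy ↦
      ClosedSubspace.span_singleton_eq_of_setOf_eq (hBy.symm.trans hBx)⟩
  · rintro ⟨x, hx, hBx, -⟩
    exact ⟨ClosedSubspace.line x, hBx ▸ le_refl (ℂ ∙ x),
      (Submodule.span_singleton_eq_bot (R := ℂ)).not.mpr hx,
      inferInstanceAs (FiniteDimensional ℂ (ℂ ∙ x))⟩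

/-- A quasipoint `B` of `L(H)` contains a nonzero finite-dimensional subspace if
and only if there is a (necessarily unique) line `ℂx` (with `x ≠ 0`) such that
`B = {U ∈ L(H) | ℂx ⊆ U}`. -/
theorem stmt3 {H : Type*} [NormedAddCommGroup H] [InnerProductSpace ℂ H]
    [CompleteSpace H] (B : Set (ClosedSubspace H)) (hB : IsQuasipointCS B) :
    (∃ U ∈ B, U.1 ≠ ⊥ ∧ FiniteDimensional ℂ U.1) ↔
    ∃ x : H, x ≠ 0 ∧
      B = {U : ClosedSubspace H | Submodule.span ℂ {x} ≤ U.1} ∧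
      ∀ y : H, y ≠ 0 → B = {U : ClosedSubspace H | Submodule.span ℂ {y} ≤ U.1} →
        Submodule.span ℂ {y} = Submodule.span ℂ {x} :=
  stmt3_general B hB
end

section
/- Let H be an infinite-dimensional complex Hilbert space and let B be a quasipoint in the lattice L(H) of closed subspaces of H. Then B contains no nonzero finite-dimensional subspace if and only if every closed subspace of finite codimension (i.e. every U ∈ L(H) whose orthogonal complement is finite-dimensional) belongs to B. -/
/-!
A quasipoint is a maximal filter base of nonzero closed subspaces, so a closed subspace `U`
belongs to it exactly when it meets every member nontrivially. If `Uᗮ` is finite-dimensional,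
a subspace meeting `U` trivially embeds into `H ⧸ U ≃ Uᗮ`, hence is finite-dimensional; so when
`B` has no nonzero finite-dimensional member, every finite-codimensional `U` lies in `B`.
Conversely, a nonzero finite-dimensional `U ∈ B` would force `Uᗮ ∈ B`, yet `U ⊓ Uᗮ = ⊥`.
-/

theorem Submodule.finiteDimensional_of_disjoint_of_finiteDimensional_orthogonal
    {𝕜 H : Type*} [RCLike 𝕜] [NormedAddCommGroup H] [InnerProductSpace 𝕜 H] [CompleteSpace H]
    {U W : Submodule 𝕜 H} (hU : IsClosed (U : Set H)) [FiniteDimensional 𝕜 Uᗮ]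
    (h : Disjoint W U) : FiniteDimensional 𝕜 W := by
  have : CompleteSpace U := hU.completeSpace_coe
  have : FiniteDimensional 𝕜 (H ⧸ U) :=
    (U.quotientEquivOfIsCompl Uᗮ U.isCompl_orthogonal).symm.finiteDimensional
  refine Module.Finite.of_injective (U.mkQ.domRestrict W) ?_
  rwa [← LinearMap.ker_eq_bot, LinearMap.ker_domRestrict, Submodule.ker_mkQ,
    ← Submodule.disjoint_iff_comap_eq_bot]

namespace IsQuasipointCS

variable {H : Type*} [NormedAddCommGroup H] [InnerProductSpace ℂ H]
  {B : Set (ClosedSubspace H)}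

theorem not_disjoint (hB : IsQuasipointCS B) {U V : ClosedSubspace H} (hU : U ∈ B)
    (hV : V ∈ B) : ¬ Disjoint U.1 V.1 := by
  intro hUV
  obtain ⟨W, hW, hle⟩ := hB.2.2.1 U hU V hV
  exact hB.ne_bot hW (le_bot_iff.mp (hUV.eq_bot ▸ hle))

/-- Maximality: `B` together with all closed subspaces containing some `W ⊓ U`, `W ∈ B`,
is again a directed family avoiding `0`. -/
theorem mem_of_forall_not_disjoint (hB : IsQuasipointCS B) {U : ClosedSubspace H}
    (hU : ∀ W ∈ B, ¬ Disjoint W.1 U.1) : U ∈ B := by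
  obtain ⟨⟨W₀, hW₀⟩, -, hdir, hmax⟩ := hB
  let C : Set (ClosedSubspace H) := {V | ∃ W ∈ B, W.1 ⊓ U.1 ≤ V.1}
  have hzero : zeroCS H ∉ C := by
    rintro ⟨W, hW, hle⟩
    exact hU W hW (disjoint_iff.mpr (le_bot_iff.mp hle))
  have hdirC : ∀ V₁ ∈ C, ∀ V₂ ∈ C, ∃ V ∈ C, V.1 ≤ V₁.1 ⊓ V₂.1 := by
    rintro V₁ ⟨W₁, hW₁, h₁⟩ V₂ ⟨W₂, hW₂, h₂⟩
    obtain ⟨W, hW, hle⟩ := hdir W₁ hW₁ W₂ hW₂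
    refine ⟨⟨W.1 ⊓ U.1, W.2.inter U.2⟩, ⟨W, hW, le_rfl⟩, le_inf ?_ ?_⟩
    · exact (inf_le_inf_right _ (hle.trans inf_le_left)).trans h₁
    · exact (inf_le_inf_right _ (hle.trans inf_le_right)).trans h₂
  rw [hmax C hzero hdirC fun W hW => ⟨W, hW, inf_le_left⟩]
  exact ⟨W₀, hW₀, inf_le_right⟩

end IsQuasipointCS

theorem stmt4_general {H : Type*} [NormedAddCommGroup H] [InnerProductSpace ℂ H]
    [CompleteSpace H]
    (B : Set (ClosedSubspace H)) (hB : IsQuasipointCS B) :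
    (¬ ∃ U ∈ B, U.1 ≠ ⊥ ∧ FiniteDimensional ℂ U.1) ↔
    ∀ U : ClosedSubspace H, FiniteDimensional ℂ (U.1ᗮ) → U ∈ B := by
  constructor
  · intro hno U hUfin
    refine hB.mem_of_forall_not_disjoint fun W hW hWU => hno ⟨W, hW, hB.ne_bot hW, ?_⟩
    exact Submodule.finiteDimensional_of_disjoint_of_finiteDimensional_orthogonal U.2 hWU
  · rintro hall ⟨U, hU, -, hUfin⟩
    have hUperp : FiniteDimensional ℂ U.1ᗮᗮ := by rwa [Submodule.orthogonal_orthogonal]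
    exact hB.not_disjoint hU (hall ⟨U.1ᗮ, Submodule.isClosed_orthogonal U.1⟩ hUperp)
      U.1.orthogonal_disjoint

/-- Let `H` be infinite-dimensional. A quasipoint `B` of `L(H)` contains no
nonzero finite-dimensional subspace if and only if every closed subspace of
finite codimension (finite-dimensional orthogonal complement) belongs to `B`. -/
theorem stmt4 {H : Type*} [NormedAddCommGroup H] [InnerProductSpace ℂ H]
    [CompleteSpace H] (hdim : ¬ FiniteDimensional ℂ H)
    (B : Set (ClosedSubspace H)) (hB : IsQuasipointCS B) :
    (¬ ∃ U ∈ B, U.1 ≠ ⊥ ∧ FiniteDimensional ℂ U.1) ↔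
    ∀ U : ClosedSubspace H, FiniteDimensional ℂ (U.1ᗮ) → U ∈ B :=
  stmt4_general B hB
end

section
/- Let H be a complex Hilbert space and let P be a nonzero closed subspace of H. Then the principal dual ideal H_P := {U ∈ L(H) | P ⊆ U} equals the intersection of all quasipoints of L(H) that contain P. -/
/-!
A quasipoint `B` is an upper set, since adjoining to `B` a subspace above one of its
members keeps it downward directed; so every quasipoint containing `P` contains `H_P`.
Conversely, for every nonzero vector `x` the closed subspaces containing `x` form a quasipoint,
because every nonzero subspace of the line `ℂ ∙ x` contains `x`. If `U` does not contain `P`, a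
vector `x ∈ P \ U` gives a quasipoint containing `P` but not `U`.
-/

namespace ClosedSubspace

variable {H : Type*} [NormedAddCommGroup H] [InnerProductSpace ℂ H]

def IsDownDirected (B : Set (ClosedSubspace H)) : Prop :=
  ∀ U ∈ B, ∀ V ∈ B, ∃ W ∈ B, W.1 ≤ U.1 ⊓ V.1

def top : ClosedSubspace H := ⟨⊤, isClosed_univ⟩

def inf_s6 (U V : ClosedSubspace H) : ClosedSubspace H := ⟨U.1 ⊓ V.1, U.2.inter V.2⟩

def lineSpan (x : H) : ClosedSubspace H := ⟨ℂ ∙ x, Submodule.closed_of_finiteDimensional _⟩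

theorem eq_zeroCS_iff {U : ClosedSubspace H} : U = zeroCS H ↔ U.1 = ⊥ := Subtype.ext_iff

theorem IsDownDirected.insert_of_le {B : Set (ClosedSubspace H)} (hB : IsDownDirected B)
    {U V : ClosedSubspace H} (hV : V ∈ B) (hVU : V.1 ≤ U.1) : IsDownDirected (insert U B) := by
  have below : ∀ X ∈ insert U B, ∃ X' ∈ B, X'.1 ≤ X.1 := by
    rintro X (rfl | hX)
    exacts [⟨V, hV, hVU⟩, ⟨X, hX, le_rfl⟩]
  intro X hX Y hY
  obtain ⟨X', hX', hX'X⟩ := below X hX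
  obtain ⟨Y', hY', hY'Y⟩ := below Y hY
  obtain ⟨W, hW, hWle⟩ := hB X' hX' Y' hY'
  exact ⟨W, .inr hW, hWle.trans (inf_le_inf hX'X hY'Y)⟩

end ClosedSubspace

section

open ClosedSubspace

variable {H : Type*} [NormedAddCommGroup H] [InnerProductSpace ℂ H]

theorem IsQuasipointCS.mem_of_le {B : Set (ClosedSubspace H)} (hB : IsQuasipointCS B)
    {U V : ClosedSubspace H} (hV : V ∈ B) (hVU : V.1 ≤ U.1) : U ∈ B := by
  obtain ⟨-, hzero, hdir, hmax⟩ := hB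
  have hU : U ≠ zeroCS H := by
    rintro rfl
    exact hzero (eq_zeroCS_iff.2 (le_bot_iff.1 hVU) ▸ hV)
  have hzero' : zeroCS H ∉ insert U B := by
    rintro (h | h)
    exacts [hU h.symm, hzero h]
  rw [hmax _ hzero' (IsDownDirected.insert_of_le hdir hV hVU) (Set.subset_insert U B)]
  exact Set.mem_insert U B

theorem isQuasipointCS_setOf_mem {x : H} (hx : x ≠ 0) :
    IsQuasipointCS {V : ClosedSubspace H | x ∈ V.1} := by
  refine ⟨⟨top, trivial⟩, fun h => hx ((Submodule.mem_bot ℂ).1 h),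
    fun U hU V hV => ⟨inf_s6 U V, ⟨hU, hV⟩, le_rfl⟩, fun C hzero hdir hsub => ?_⟩
  refine hsub.antisymm fun W hW => ?_
  obtain ⟨W', hW', hW'le⟩ := hdir (lineSpan x) (hsub (Submodule.mem_span_singleton_self x)) W hW
  have hW'line : W'.1 = ℂ ∙ x :=
    ((nonzero_span_atom x hx).le_iff.1 (hW'le.trans inf_le_left)).resolve_left
      fun h => hzero (eq_zeroCS_iff.2 h ▸ hW')
  exact hW'le.trans inf_le_right (hW'line ▸ Submodule.mem_span_singleton_self x)

end

theorem stmt6_general {H : Type*} [NormedAddCommGroup H] [InnerProductSpace ℂ H]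
    (P : ClosedSubspace H) :
    {U : ClosedSubspace H | P.1 ≤ U.1} =
      ⋂₀ {B : Set (ClosedSubspace H) | IsQuasipointCS B ∧ P ∈ B} := by
  ext U
  simp only [Set.mem_ofPred_eq, Set.mem_sInter]
  refine ⟨fun hPU B ⟨hB, hPB⟩ => hB.mem_of_le hPB hPU, fun hU => ?_⟩
  by_contra hPU
  obtain ⟨x, hxP, hxU⟩ := SetLike.not_le_iff_exists.1 hPU
  have hx : x ≠ 0 := fun h => hxU (h ▸ U.1.zero_mem)
  exact hxU (hU _ ⟨isQuasipointCS_setOf_mem hx, hxP⟩)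

/-- For a nonzero closed subspace `P` of `H`, the principal dual ideal
`H_P = {U ∈ L(H) | P ⊆ U}` equals the intersection of all quasipoints of
`L(H)` containing `P`. -/
theorem stmt6 {H : Type*} [NormedAddCommGroup H] [InnerProductSpace ℂ H]
    [CompleteSpace H] (P : ClosedSubspace H) (hP : P.1 ≠ ⊥) :
    {U : ClosedSubspace H | P.1 ≤ U.1} =
      ⋂₀ {B : Set (ClosedSubspace H) | IsQuasipointCS B ∧ P ∈ B} :=
  stmt6_general P
end

section
/- Let L be a complete lattice and let E be a bounded spectral family in L with observable function f_E(J) := inf{λ ∈ ℝ | E_λ ∈ J} on the set D(L) of dual ideals of L. Then f_E is upper semicontinuous: for every dual ideal J₀ and every ε > 0 there exists P ∈ J₀ such that f_E(J) < f_E(J₀) + ε for every dual ideal J with P ∈ J. -/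
/-- A dual ideal in a complete lattice: a nonempty subset not containing `⊥`,
closed under binary meets and upward closed. -/
def IsDualIdeal {L : Type*} [CompleteLattice L] (J : Set L) : Prop :=
  J.Nonempty ∧ ⊥ ∉ J ∧ (∀ a ∈ J, ∀ b ∈ J, a ⊓ b ∈ J) ∧ ∀ a ∈ J, ∀ b, a ≤ b → b ∈ J

/-- A spectral family in a complete lattice: monotone, right-continuous, with
infimum `⊥` and supremum `⊤`. -/
def IsSpectralFamily {L : Type*} [CompleteLattice L] (E : ℝ → L) : Prop :=
  Monotone E ∧ (∀ lam : ℝ, E lam = ⨅ mu ∈ Set.Ioi lam, E mu) ∧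
    (⨅ lam : ℝ, E lam) = ⊥ ∧ (⨆ lam : ℝ, E lam) = ⊤

/-- A bounded spectral family. -/
def IsBoundedSpectralFamily {L : Type*} [CompleteLattice L] (E : ℝ → L) : Prop :=
  IsSpectralFamily E ∧ ∃ a b : ℝ, (∀ lam : ℝ, lam < a → E lam = ⊥) ∧
    ∀ lam : ℝ, b ≤ lam → E lam = ⊤

/-- The observable function of a spectral family: `f_E(J) = inf {λ | E λ ∈ J}`. -/
noncomputable def obsFun {L : Type*} [CompleteLattice L] (E : ℝ → L) (J : Set L) : ℝ :=
  sInf {lam : ℝ | E lam ∈ J}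

/-- The observable function of a bounded spectral family is upper semicontinuous on
the space of dual ideals: for every dual ideal `J₀` and `ε > 0` there is `P ∈ J₀`
with `f_E(J) < f_E(J₀) + ε` for every dual ideal `J` containing `P`. -/
theorem stmt8 {L : Type*} [CompleteLattice L] (E : ℝ → L)
    (hE : IsBoundedSpectralFamily E) (J₀ : Set L) (hJ₀ : IsDualIdeal J₀)
    (ε : ℝ) (hε : 0 < ε) :
    ∃ P ∈ J₀, ∀ J : Set L, IsDualIdeal J → P ∈ J → obsFun E J < obsFun E J₀ + ε := by
  obtain ⟨⟨hmono, -, -, -⟩, a, b, ha, hb⟩ := hE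
  -- For any dual ideal J, the set {λ | E λ ∈ J} is bounded below by a
  have hbdd : ∀ J : Set L, IsDualIdeal J → BddBelow {lam : ℝ | E lam ∈ J} := by
    intro J hJ
    refine ⟨a, fun lam hlam => ?_⟩
    by_contra hlt
    push_neg at hlt
    exact hJ.2.1 (ha lam hlt ▸ hlam)
  have htop : ∀ J : Set L, IsDualIdeal J → ⊤ ∈ J := by
    intro J hJ
    obtain ⟨x, hx⟩ := hJ.1
    exact hJ.2.2.2 x hx ⊤ le_top
  have hne : (E b ∈ J₀) := hb b le_rfl ▸ htop J₀ hJ₀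
  set s := obsFun E J₀ with hs
  -- find λ₀ ∈ {λ | E λ ∈ J₀} with λ₀ < s + ε/2
  obtain ⟨lam₀, hlam₀, hlam₀lt⟩ :=
    Real.lt_sInf_add_pos (s := {lam : ℝ | E lam ∈ J₀}) ⟨b, hne⟩ (half_pos hε)
  refine ⟨E (s + ε / 2), hJ₀.2.2.2 (E lam₀) hlam₀ _ (hmono hlam₀lt.le), ?_⟩
  intro J hJ hPJ
  have h1 : obsFun E J ≤ s + ε / 2 := csInf_le (hbdd J hJ) hPJ
  linarith
end

section
/- Let L be a complete lattice and let f : D(L) → ℝ be any function on the set of dual ideals of L. Then the following are equivalent: (i) f is upper semicontinuous (for every dual ideal J₀ and ε > 0 there exists P ∈ J₀ with f(J) < f(J₀) + ε for all dual ideals J containing P) and decreasing (J ⊆ J' implies f(J') ≤ f(J)); (ii) for every dual ideal J, f(J) = inf{f(H_P) | P ∈ J}, where H_P := {b ∈ L | b ≥ P} is the principal dual ideal generated by P. -/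
lemma principal_dualIdeal {L : Type*} [CompleteLattice L] {J : Set L} (hJ : IsDualIdeal J)
    {P : L} (hP : P ∈ J) : IsDualIdeal {b : L | P ≤ b} := by
  refine ⟨⟨P, le_refl P⟩, ?_, ?_, ?_⟩
  · intro h
    exact hJ.2.1 (le_bot_iff.mp h ▸ hP)
  · intro a ha b hb; exact le_inf ha hb
  · intro a ha b hab; exact le_trans ha hab

/-- For a real-valued function on the dual ideals of a complete lattice, being
upper semicontinuous and decreasing is equivalent to the condition that
`f(J)` is the infimum of the values `f(H_P)` on principal dual ideals
`H_P = {b | P ≤ b}` for `P ∈ J`. -/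
theorem stmt9 {L : Type*} [CompleteLattice L] (f : Set L → ℝ) :
    ((∀ J₀ : Set L, IsDualIdeal J₀ → ∀ ε : ℝ, 0 < ε →
        ∃ P ∈ J₀, ∀ J : Set L, IsDualIdeal J → P ∈ J → f J < f J₀ + ε) ∧
      (∀ J J' : Set L, IsDualIdeal J → IsDualIdeal J' → J ⊆ J' → f J' ≤ f J)) ↔
    (∀ J : Set L, IsDualIdeal J →
      IsGLB ((fun P : L => f {b : L | P ≤ b}) '' J) (f J)) := by
  constructor
  · rintro ⟨husc, hdec⟩ J hJ
    constructor
    · rintro x ⟨P, hP, rfl⟩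
      exact hdec _ J (principal_dualIdeal hJ hP) hJ (fun b hb => hJ.2.2.2 P hP b hb)
    · intro c hc
      by_contra hlt
      push_neg at hlt
      obtain ⟨P, hP, hP'⟩ := husc J hJ (c - f J) (by linarith)
      have h1 : f {b : L | P ≤ b} < f J + (c - f J) :=
        hP' _ (principal_dualIdeal hJ hP) (le_refl P)
      have h2 : c ≤ f {b : L | P ≤ b} := hc ⟨P, hP, rfl⟩
      linarith
  · intro h
    refine ⟨?_, ?_⟩
    · intro J₀ hJ₀ ε hε
      obtain ⟨Q, hQ⟩ := hJ₀.1
      have hglb := h J₀ hJ₀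
      have : ∃ x ∈ (fun P : L => f {b : L | P ≤ b}) '' J₀, x < f J₀ + ε := by
        by_contra hcon
        push_neg at hcon
        have : f J₀ + ε ≤ f J₀ := hglb.2 hcon
        linarith
      obtain ⟨x, ⟨P, hP, rfl⟩, hx⟩ := this
      refine ⟨P, hP, fun J hJ hPJ => ?_⟩
      have := (h J hJ).1 ⟨P, hPJ, rfl⟩
      linarith
    · intro J J' hJ hJ' hsub
      refine (h J hJ).2 ?_
      rintro x ⟨P, hP, rfl⟩
      exact (h J' hJ').1 ⟨P, hsub hP, rfl⟩
end

section
/- Let L be a complete lattice and let f : D(L) → ℝ be an abstract observable function. Then for every λ in the image of f, the set J_λ := ⋂{J ∈ D(L) | f(J) = λ} is a dual ideal, f(J_λ) = λ, and J_λ ⊆ J for every dual ideal J with f(J) = λ; i.e. the fiber f⁻¹(λ) has a minimal element, namely J_λ. -/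
/-- An abstract observable function on the dual ideals of a complete lattice:
upper semicontinuous, and satisfying the intersection condition
`f(⋂ S) = sup (f '' S)` for every nonempty family `S` of dual ideals. -/
def IsObservableFunction {L : Type*} [CompleteLattice L] (f : Set L → ℝ) : Prop :=
  (∀ J₀ : Set L, IsDualIdeal J₀ → ∀ ε : ℝ, 0 < ε →
      ∃ P ∈ J₀, ∀ J : Set L, IsDualIdeal J → P ∈ J → f J < f J₀ + ε) ∧
  ∀ S : Set (Set L), S.Nonempty → (∀ J ∈ S, IsDualIdeal J) →
    IsLUB (f '' S) (f (⋂₀ S))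

/-- For an abstract observable function `f` and `λ` in the image of `f` (on dual
ideals), the intersection `J_λ` of all dual ideals with `f`-value `λ` is a dual
ideal, has `f`-value `λ`, and is the minimal element of the fiber over `λ`. -/
theorem stmt10 {L : Type*} [CompleteLattice L] (f : Set L → ℝ)
    (hf : IsObservableFunction f) (lam : ℝ)
    (hlam : ∃ J : Set L, IsDualIdeal J ∧ f J = lam) :
    IsDualIdeal (⋂₀ {J : Set L | IsDualIdeal J ∧ f J = lam}) ∧
    f (⋂₀ {J : Set L | IsDualIdeal J ∧ f J = lam}) = lam ∧
    ∀ J : Set L, IsDualIdeal J → f J = lam →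
      ⋂₀ {J : Set L | IsDualIdeal J ∧ f J = lam} ⊆ J := by
  obtain ⟨J₀, hJ₀, hfJ₀⟩ := hlam
  set S : Set (Set L) := {J : Set L | IsDualIdeal J ∧ f J = lam} with hS
  have hSne : S.Nonempty := ⟨J₀, hJ₀, hfJ₀⟩
  have hSdi : ∀ J ∈ S, IsDualIdeal J := fun J hJ => hJ.1
  have htop : ∀ J ∈ S, (⊤ : L) ∈ J := by
    intro J hJ
    obtain ⟨a, ha⟩ := hJ.1.1
    exact hJ.1.2.2.2 a ha ⊤ le_top
  have hdi : IsDualIdeal (⋂₀ S) := by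
    refine ⟨⟨⊤, ?_⟩, ?_, ?_, ?_⟩
    · exact fun J hJ => htop J hJ
    · intro hbot
      exact hJ₀.2.1 (hbot J₀ ⟨hJ₀, hfJ₀⟩)
    · intro a ha b hb J hJ
      exact (hJ.1).2.2.1 a (ha J hJ) b (hb J hJ)
    · intro a ha b hab J hJ
      exact (hJ.1).2.2.2 a (ha J hJ) b hab
  have himg : f '' S = {lam} := by
    apply Set.eq_singleton_iff_nonempty_unique_mem.mpr
    constructor
    · exact ⟨f J₀, ⟨J₀, ⟨hJ₀, hfJ₀⟩, rfl⟩⟩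
    · rintro x ⟨J, hJ, rfl⟩
      exact hJ.2
  have hval : f (⋂₀ S) = lam := by
    have := hf.2 S hSne hSdi
    rw [himg] at this
    exact (isLUB_singleton.unique this).symm
  exact ⟨hdi, hval, fun J hJ hfJ => Set.sInter_subset_of_mem ⟨hJ, hfJ⟩⟩
end

section
/- Let L be a complete lattice and let f : D(L) → ℝ be an abstract observable function. For λ in the image of f let J_λ := ⋂{J ∈ D(L) | f(J) = λ} (the minimal dual ideal with f-value λ) and set E_λ := ⨅ J_λ, the infimum in L of the elements of J_λ. Then the family (E_λ)_{λ ∈ im f} is increasing: for λ, μ ∈ im f with λ ≤ μ one has J_μ ⊆ J_λ and hence E_λ ≤ E_μ. -/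
lemma top_mem_of_dualIdeal {L : Type*} [CompleteLattice L] {J : Set L}
    (hJ : IsDualIdeal J) : ⊤ ∈ J := by
  obtain ⟨a, ha⟩ := hJ.1
  exact hJ.2.2.2 a ha ⊤ le_top

lemma sInter_dualIdeal {L : Type*} [CompleteLattice L] {S : Set (Set L)}
    (hS : S.Nonempty) (h : ∀ J ∈ S, IsDualIdeal J) : IsDualIdeal (⋂₀ S) := by
  refine ⟨⟨⊤, ?_⟩, ?_, ?_, ?_⟩
  · exact fun J hJ => top_mem_of_dualIdeal (h J hJ)
  · obtain ⟨J, hJ⟩ := hS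
    exact fun hbot => (h J hJ).2.1 (hbot J hJ)
  · intro a ha b hb J hJ
    exact (h J hJ).2.2.1 a (ha J hJ) b (hb J hJ)
  · intro a ha b hab J hJ
    exact (h J hJ).2.2.2 a (ha J hJ) b hab

/-- For an abstract observable function `f`, the family `E_λ := ⨅ J_λ`
(where `J_λ` is the minimal dual ideal with `f`-value `λ`) indexed by the image
of `f` is increasing: `λ ≤ μ` implies `J_μ ⊆ J_λ` and hence `E_λ ≤ E_μ`. -/
theorem stmt11 {L : Type*} [CompleteLattice L] (f : Set L → ℝ)
    (hf : IsObservableFunction f) (lam mu : ℝ)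
    (hlam : ∃ J : Set L, IsDualIdeal J ∧ f J = lam)
    (hmu : ∃ J : Set L, IsDualIdeal J ∧ f J = mu)
    (hle : lam ≤ mu) :
    ⋂₀ {J : Set L | IsDualIdeal J ∧ f J = mu} ⊆
      ⋂₀ {J : Set L | IsDualIdeal J ∧ f J = lam} ∧
    sInf (⋂₀ {J : Set L | IsDualIdeal J ∧ f J = lam}) ≤
      sInf (⋂₀ {J : Set L | IsDualIdeal J ∧ f J = mu}) := by
  set Smu : Set (Set L) := {J : Set L | IsDualIdeal J ∧ f J = mu} with hSmu_def
  have hSmu_ne : Smu.Nonempty := by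
    obtain ⟨J, hJ, hfJ⟩ := hmu; exact ⟨J, hJ, hfJ⟩
  have hSmu_di : ∀ J ∈ Smu, IsDualIdeal J := fun J hJ => hJ.1
  have hJmu_di : IsDualIdeal (⋂₀ Smu) := sInter_dualIdeal hSmu_ne hSmu_di
  -- f(⋂₀ Smu) = mu
  have hlub := hf.2 Smu hSmu_ne hSmu_di
  have hfJmu : f (⋂₀ Smu) = mu := by
    obtain ⟨J, hJ⟩ := hSmu_ne
    refine le_antisymm (hlub.2 ?_) ?_
    · rintro x ⟨K, hK, rfl⟩; exact le_of_eq hK.2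
    · have : mu ∈ f '' Smu := ⟨J, hJ, hJ.2⟩
      exact hlub.1 this
  have key : ∀ J : Set L, IsDualIdeal J → f J = lam → ⋂₀ Smu ⊆ J := by
    intro J hJ hfJ
    set T : Set (Set L) := {J, ⋂₀ Smu} with hT_def
    have hT_ne : T.Nonempty := ⟨J, Or.inl rfl⟩
    have hT_di : ∀ K ∈ T, IsDualIdeal K := by
      rintro K (rfl | rfl)
      · exact hJ
      · exact hJmu_di
    have hlubT := hf.2 T hT_ne hT_di
    have hfT : f (⋂₀ T) = mu := by
      refine le_antisymm (hlubT.2 ?_) ?_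
      · rintro x ⟨K, (rfl | rfl), rfl⟩
        · exact hfJ ▸ hle
        · exact le_of_eq hfJmu
      · exact hfJmu ▸ hlubT.1 ⟨⋂₀ Smu, Or.inr rfl, rfl⟩
    have hT_di' : IsDualIdeal (⋂₀ T) := sInter_dualIdeal hT_ne hT_di
    have hmem : ⋂₀ T ∈ Smu := ⟨hT_di', hfT⟩
    have h1 : ⋂₀ Smu ⊆ ⋂₀ T := Set.sInter_subset_of_mem hmem
    have h2 : ⋂₀ T ⊆ J := Set.sInter_subset_of_mem (Or.inl rfl)
    exact h1.trans h2
  have hsub : ⋂₀ Smu ⊆ ⋂₀ {J : Set L | IsDualIdeal J ∧ f J = lam} := by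
    intro x hx
    refine Set.mem_sInter.2 ?_
    rintro J ⟨hJ, hfJ⟩
    exact key J hJ hfJ hx
  exact ⟨hsub, sInf_le_sInf hsub⟩
end

section
/- Let L be a complete lattice and let f : D(L) → ℝ be an abstract observable function. Then f is monotonely continuous: for every nonempty family (J_j)_{j∈I} of dual ideals that is directed upward by inclusion (for all i, j ∈ I there is k ∈ I with J_i ∪ J_j ⊆ J_k), the union ⋃_{j∈I} J_j is a dual ideal and f(⋃_{j∈I} J_j) = inf_{j∈I} f(J_j). -/
/-- An abstract observable function is monotonely continuous: for a nonempty
family of dual ideals directed upward by inclusion, the union is a dual ideal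
and `f` of the union is the infimum of the values. -/
theorem stmt12 {L : Type*} [CompleteLattice L] (f : Set L → ℝ)
    (hf : IsObservableFunction f) {I : Type*} [Nonempty I]
    (J : I → Set L) (hJ : ∀ i, IsDualIdeal (J i))
    (hdir : ∀ i j : I, ∃ k : I, J i ∪ J j ⊆ J k) :
    IsDualIdeal (⋃ i, J i) ∧
      IsGLB (Set.range fun i => f (J i)) (f (⋃ i, J i)) := by
  have hUdi : IsDualIdeal (⋃ i, J i) := by
    obtain ⟨i0⟩ := ‹Nonempty I›
    refine ⟨((hJ i0).1).imp (fun a ha => Set.mem_iUnion.2 ⟨i0, ha⟩), ?_, ?_, ?_⟩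
    · intro hbot
      obtain ⟨i, hi⟩ := Set.mem_iUnion.1 hbot
      exact (hJ i).2.1 hi
    · intro a ha b hb
      obtain ⟨i, hi⟩ := Set.mem_iUnion.1 ha
      obtain ⟨j, hj⟩ := Set.mem_iUnion.1 hb
      obtain ⟨k, hk⟩ := hdir i j
      exact Set.mem_iUnion.2 ⟨k, (hJ k).2.2.1 a (hk (Or.inl hi)) b (hk (Or.inr hj))⟩
    · intro a ha b hab
      obtain ⟨i, hi⟩ := Set.mem_iUnion.1 ha
      exact Set.mem_iUnion.2 ⟨i, (hJ i).2.2.2 a hi b hab⟩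
  have hanti : ∀ A B : Set L, IsDualIdeal A → IsDualIdeal B → A ⊆ B → f B ≤ f A := by
    intro A B hA hB hAB
    have h := hf.2 {A, B} ⟨A, Or.inl rfl⟩ (by rintro K (rfl | rfl) <;> assumption)
    have hAB' : ⋂₀ ({A, B} : Set (Set L)) = A := by
      simp [Set.sInter_insert, Set.inter_eq_left.2 hAB]
    rw [hAB'] at h
    exact h.1 ⟨B, Or.inr rfl, rfl⟩
  refine ⟨hUdi, ?_, ?_⟩
  · rintro x ⟨i, rfl⟩
    exact hanti (J i) _ (hJ i) hUdi (Set.subset_iUnion J i)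
  · intro b hb
    by_contra h
    push_neg at h
    have hε : 0 < b - f (⋃ i, J i) := by linarith
    obtain ⟨P, hP, hPf⟩ := hf.1 _ hUdi _ hε
    obtain ⟨i, hi⟩ := Set.mem_iUnion.1 hP
    have h1 := hPf (J i) (hJ i) hi
    have h2 := hb ⟨i, rfl⟩
    simp only at h2
    linarith
end

section
/- Let L be a complete lattice and let f : D(L) → ℝ be an abstract observable function. Then the image of f is a compact subset of ℝ. -/
open Set

lemma exists_antitone_isLUB_inter_Iic {T : Set ℝ}
    (hsup : ∀ S ⊆ T, S.Nonempty → ∃ y ∈ T, IsLUB S y) {c : ℕ → ℝ} (hc : Antitone c)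
    (hne : ∀ n, (T ∩ Iic (c n)).Nonempty) :
    ∃ z : ℕ → ℝ, Antitone z ∧ ∀ n, z n ∈ T ∧ IsLUB (T ∩ Iic (c n)) (z n) := by
  choose z hzT hz using fun n => hsup _ inter_subset_left (hne n)
  refine ⟨z, fun m n hmn => (hz n).mono (hz m) ?_, fun n => ⟨hzT n, hz n⟩⟩
  exact inter_subset_inter_right T (Iic_subset_Iic.2 (hc hmn))

lemma bddBelow_of_forall_isLUB_of_forall_isGLB {T : Set ℝ}
    (hsup : ∀ S ⊆ T, S.Nonempty → ∃ y ∈ T, IsLUB S y)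
    (hinf : ∀ u : ℕ → ℝ, Antitone u → (∀ n, u n ∈ T) → ∃ y ∈ T, IsGLB (range u) y) :
    BddBelow T := by
  by_contra hT
  have hne : ∀ n : ℕ, (T ∩ Iic (-(n : ℝ))).Nonempty := fun n =>
    let ⟨y, hyT, hy⟩ := not_bddBelow_iff.1 hT (-(n : ℝ))
    ⟨y, hyT, hy.le⟩
  obtain ⟨z, hz, hzT⟩ := exists_antitone_isLUB_inter_Iic hsup
    (fun m n hmn => neg_le_neg (Nat.cast_le.2 hmn)) hne
  obtain ⟨y, -, hy⟩ := hinf z hz fun n => (hzT n).1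
  obtain ⟨n, hn⟩ := exists_nat_gt (-y)
  have : y ≤ -(n : ℝ) := (hy.1 (mem_range_self n)).trans ((hzT n).2.2 fun _ hx => hx.2)
  linarith

lemma isClosed_of_forall_isLUB_of_forall_isGLB {T : Set ℝ}
    (hsup : ∀ S ⊆ T, S.Nonempty → ∃ y ∈ T, IsLUB S y)
    (hinf : ∀ u : ℕ → ℝ, Antitone u → (∀ n, u n ∈ T) → ∃ y ∈ T, IsGLB (range u) y) :
    IsClosed T := by
  refine isClosed_of_closure_subset fun y hy => ?_
  have hnear := Metric.mem_closure_iff.1 hy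
  set δ : ℕ → ℝ := fun n => 1 / ((n : ℝ) + 1)
  have hδ : ∀ n, 0 < δ n := fun n => Nat.one_div_pos_of_nat
  have hne : ∀ n, (T ∩ Iic (y + δ n)).Nonempty := fun n =>
    let ⟨b, hbT, hb⟩ := hnear (δ n) (hδ n)
    ⟨b, hbT, by rw [Real.dist_eq, abs_sub_lt_iff] at hb; simp only [mem_Iic]; linarith⟩
  obtain ⟨z, hz, hzT⟩ := exists_antitone_isLUB_inter_Iic hsup
    (fun m n hmn => by gcongr; exact Nat.one_div_le_one_div hmn) hne
  have hyz : ∀ n, y ≤ z n := by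
    intro n
    refine le_of_forall_pos_lt_add fun ε hε => ?_
    obtain ⟨b, hbT, hb⟩ := hnear (min ε (δ n)) (lt_min hε (hδ n))
    rw [Real.dist_eq, abs_sub_lt_iff] at hb
    have hbz : b ≤ z n := (hzT n).2.1 ⟨hbT, by simp only [mem_Iic]; linarith [min_le_right ε (δ n)]⟩
    linarith [min_le_left ε (δ n)]
  have hglb : IsGLB (range z) y := by
    refine ⟨forall_mem_range.2 hyz, fun w hw => le_of_forall_pos_le_add fun ε hε => ?_⟩
    obtain ⟨n, hn⟩ := exists_nat_one_div_lt hε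
    have hzn : z n ≤ y + δ n := (hzT n).2.2 fun _ hx => hx.2
    linarith [hw (mem_range_self n)]
  obtain ⟨y', hy'T, hy'⟩ := hinf z hz fun n => (hzT n).1
  rwa [hglb.unique hy']

theorem isCompact_of_forall_isLUB_of_forall_isGLB {T : Set ℝ}
    (hsup : ∀ S ⊆ T, S.Nonempty → ∃ y ∈ T, IsLUB S y)
    (hinf : ∀ u : ℕ → ℝ, Antitone u → (∀ n, u n ∈ T) → ∃ y ∈ T, IsGLB (range u) y) :
    IsCompact T := by
  rcases T.eq_empty_or_nonempty with rfl | hne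
  · exact isCompact_empty
  obtain ⟨y, -, hy⟩ := hsup T subset_rfl hne
  refine Metric.isCompact_of_isClosed_isBounded
    (isClosed_of_forall_isLUB_of_forall_isGLB hsup hinf) (isBounded_iff_bddBelow_bddAbove.2 ?_)
  exact ⟨bddBelow_of_forall_isLUB_of_forall_isGLB hsup hinf, y, hy.1⟩

section

variable {L : Type*} [CompleteLattice L]

namespace IsDualIdeal

lemma sInter {S : Set (Set L)} (hS : S.Nonempty) (h : ∀ J ∈ S, IsDualIdeal J) :
    IsDualIdeal (⋂₀ S) := by
  obtain ⟨J₀, hJ₀⟩ := hS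
  refine ⟨⟨⊤, fun J hJ => ?_⟩, fun hbot => (h J₀ hJ₀).2.1 (hbot J₀ hJ₀), ?_, ?_⟩
  · obtain ⟨⟨a, ha⟩, -, -, hup⟩ := h J hJ
    exact hup a ha ⊤ le_top
  · exact fun a ha b hb J hJ => (h J hJ).2.2.1 a (ha J hJ) b (hb J hJ)
  · exact fun a ha b hab J hJ => (h J hJ).2.2.2 a (ha J hJ) b hab

lemma iUnion {ι : Type*} [Nonempty ι] {K : ι → Set L} (hK : Directed (· ⊆ ·) K)
    (h : ∀ i, IsDualIdeal (K i)) : IsDualIdeal (⋃ i, K i) := by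
  refine ⟨(h (Classical.arbitrary ι)).1.mono (subset_iUnion K _), ?_, ?_, ?_⟩
  · simp only [mem_iUnion, not_exists]
    exact fun i => (h i).2.1
  · simp only [mem_iUnion]
    rintro a ⟨i, ha⟩ b ⟨j, hb⟩
    obtain ⟨k, hik, hjk⟩ := hK i j
    exact ⟨k, (h k).2.2.1 a (hik ha) b (hjk hb)⟩
  · simp only [mem_iUnion]
    rintro a ⟨i, ha⟩ b hab
    exact ⟨i, (h i).2.2.2 a ha b hab⟩

end IsDualIdeal

namespace IsObservableFunction

variable {f : Set L → ℝ}

lemma antitone (hf : IsObservableFunction f) {J K : Set L} (hJ : IsDualIdeal J)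
    (hK : IsDualIdeal K) (hJK : J ⊆ K) : f K ≤ f J := by
  have h := hf.2 {J, K} (insert_nonempty J {K}) (by rintro _ (rfl | rfl) <;> assumption)
  rw [sInter_pair, inter_eq_left.2 hJK] at h
  exact h.1 (mem_image_of_mem f (mem_insert_of_mem J rfl))

lemma isGLB_iUnion (hf : IsObservableFunction f) {ι : Type*} [Nonempty ι] {K : ι → Set L}
    (hK : Directed (· ⊆ ·) K) (h : ∀ i, IsDualIdeal (K i)) :
    IsGLB (range fun i => f (K i)) (f (⋃ i, K i)) := by
  have hU := IsDualIdeal.iUnion hK h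
  refine ⟨forall_mem_range.2 fun i => hf.antitone (h i) hU (subset_iUnion K i),
    fun w hw => le_of_forall_pos_le_add fun ε hε => ?_⟩
  obtain ⟨P, hPU, hP⟩ := hf.1 _ hU ε hε
  obtain ⟨i, hPi⟩ := mem_iUnion.1 hPU
  exact (hw (mem_range_self i)).trans (hP _ (h i) hPi).le

lemma exists_isLUB_image (hf : IsObservableFunction f) {S : Set ℝ}
    (hST : S ⊆ f '' {J | IsDualIdeal J}) (hS : S.Nonempty) :
    ∃ y ∈ f '' {J | IsDualIdeal J}, IsLUB S y := by
  set 𝒮 := {J | IsDualIdeal J ∧ f J ∈ S}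
  have himage : f '' 𝒮 = S := by
    refine Subset.antisymm (image_subset_iff.2 fun J hJ => hJ.2) fun y hy => ?_
    obtain ⟨J, hJ, rfl⟩ := hST hy
    exact ⟨J, ⟨hJ, hy⟩, rfl⟩
  have h𝒮 : 𝒮.Nonempty := by
    obtain ⟨y, hy⟩ := hS
    obtain ⟨J, hJ, rfl⟩ := hST hy
    exact ⟨J, hJ, hy⟩
  refine ⟨f (⋂₀ 𝒮), mem_image_of_mem f (IsDualIdeal.sInter h𝒮 fun J hJ => hJ.1), ?_⟩
  rw [← himage]
  exact hf.2 𝒮 h𝒮 fun J hJ => hJ.1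

lemma exists_isGLB_of_antitone (hf : IsObservableFunction f) {u : ℕ → ℝ} (hu : Antitone u)
    (huT : ∀ n, u n ∈ f '' {J | IsDualIdeal J}) :
    ∃ y ∈ f '' {J | IsDualIdeal J}, IsGLB (range u) y := by
  choose J hJ hJu using huT
  set K : ℕ → Set L := fun n => ⋂₀ (J '' Ici n)
  have hK : ∀ n, IsDualIdeal (K n) := fun n =>
    IsDualIdeal.sInter ((nonempty_Ici).image J) (forall_mem_image.2 fun m _ => hJ m)
  have hKu : ∀ n, f (K n) = u n := by
    intro n
    refine (hf.2 _ ((nonempty_Ici).image J) (forall_mem_image.2 fun m _ => hJ m)).unique ?_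
    rw [image_image, funext hJu]
    exact ⟨forall_mem_image.2 fun m hm => hu hm, fun w hw => hw (mem_image_of_mem u self_mem_Ici)⟩
  have hmono : Monotone K := fun m n hmn =>
    sInter_subset_sInter (image_mono (Ici_subset_Ici.2 hmn))
  refine ⟨_, mem_image_of_mem f (IsDualIdeal.iUnion hmono.directed_le hK), ?_⟩
  simpa only [hKu] using hf.isGLB_iUnion hmono.directed_le hK

end IsObservableFunction

end

/-- The image of an abstract observable function (on the dual ideals) is a
compact subset of ℝ. -/
theorem stmt13 {L : Type*} [CompleteLattice L] (f : Set L → ℝ)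
    (hf : IsObservableFunction f) :
    IsCompact {y : ℝ | ∃ J : Set L, IsDualIdeal J ∧ f J = y} := by
  exact isCompact_of_forall_isLUB_of_forall_isGLB (fun _ => hf.exists_isLUB_image)
    fun _ => hf.exists_isGLB_of_antitone
end

section
/- Let L be a complete lattice and let f : D(L) → ℝ be an abstract observable function. For λ in the image of f set J_λ := ⋂{J ∈ D(L) | f(J) = λ} and E_λ := ⨅ J_λ. For λ ∉ im f set E_λ := ⊥ if S_λ := {μ ∈ im f | μ < λ} is empty, and E_λ := E_{sup S_λ} otherwise. Then E^f := (E_λ)_{λ∈ℝ} is a bounded spectral family in L: it is monotone, right-continuous (E_λ = ⨅_{μ>λ} E_μ), and there exist a, b ∈ ℝ with E_λ = ⊥ for λ < a and E_λ = ⊤ for λ ≥ b. -/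
open scoped Classical

/-- The image of `f` on dual ideals. -/
def imf {L : Type*} [CompleteLattice L] (f : Set L → ℝ) : Set ℝ :=
  {mu : ℝ | ∃ J : Set L, IsDualIdeal J ∧ f J = mu}

/-- For `λ` in the image of `f`: the infimum in `L` of the minimal dual ideal
`J_λ` with `f`-value `λ`. -/
noncomputable def Eim {L : Type*} [CompleteLattice L] (f : Set L → ℝ) (lam : ℝ) : L :=
  sInf (⋂₀ {J : Set L | IsDualIdeal J ∧ f J = lam})

/-- The spectral family associated to an abstract observable function: for
`λ ∈ im f` it is `⨅ J_λ`; for `λ ∉ im f` it is `⊥` if `S_λ = {μ ∈ im f | μ < λ}`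
is empty, and the value at `sup S_λ` otherwise. -/
noncomputable def Ef {L : Type*} [CompleteLattice L] (f : Set L → ℝ) (lam : ℝ) : L :=
  if lam ∈ imf f then Eim f lam
  else if ({mu : ℝ | mu ∈ imf f ∧ mu < lam}).Nonempty then
    Eim f (sSup {mu : ℝ | mu ∈ imf f ∧ mu < lam})
  else ⊥

-- auxiliary development
def Jlam {L : Type*} [CompleteLattice L] (f : Set L → ℝ) (lam : ℝ) : Set L :=
  ⋂₀ {J : Set L | IsDualIdeal J ∧ f J = lam}

section Aux
variable {L : Type*} [CompleteLattice L] {f : Set L → ℝ}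

lemma top_mem_DI {J : Set L} (h : IsDualIdeal J) : ⊤ ∈ J := by
  obtain ⟨⟨a, ha⟩, -, -, hup⟩ := h
  exact hup a ha ⊤ le_top

lemma DI_sInter {S : Set (Set L)} (hS : S.Nonempty) (h : ∀ J ∈ S, IsDualIdeal J) :
    IsDualIdeal (⋂₀ S) := by
  obtain ⟨J₀, hJ₀⟩ := hS
  refine ⟨⟨⊤, Set.mem_sInter.mpr fun J hJ => top_mem_DI (h J hJ)⟩,
    fun hbot => (h J₀ hJ₀).2.1 (Set.mem_sInter.mp hbot J₀ hJ₀), ?_, ?_⟩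
  · intro a ha b hb
    exact Set.mem_sInter.mpr fun J hJ =>
      (h J hJ).2.2.1 a (Set.mem_sInter.mp ha J hJ) b (Set.mem_sInter.mp hb J hJ)
  · intro a ha b hab
    exact Set.mem_sInter.mpr fun J hJ => (h J hJ).2.2.2 a (Set.mem_sInter.mp ha J hJ) b hab

lemma f_anti (hf : IsObservableFunction f) {J J' : Set L} (hJ : IsDualIdeal J)
    (hJ' : IsDualIdeal J') (hsub : J ⊆ J') : f J' ≤ f J := by
  have hlub := hf.2 {J, J'} ⟨J, Or.inl rfl⟩ (by rintro K (rfl | rfl) <;> assumption)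
  rw [Set.sInter_pair, Set.inter_eq_self_of_subset_left hsub] at hlub
  exact hlub.1 ⟨J', Or.inr rfl, rfl⟩

lemma Jlam_DI (hf : IsObservableFunction f) {lam : ℝ} (hlam : lam ∈ imf f) :
    IsDualIdeal (Jlam f lam) := by
  obtain ⟨J, hJ, hv⟩ := hlam
  exact DI_sInter ⟨J, hJ, hv⟩ fun K hK => hK.1

lemma Jlam_val (hf : IsObservableFunction f) {lam : ℝ} (hlam : lam ∈ imf f) :
    f (Jlam f lam) = lam := by
  obtain ⟨J, hJ, hv⟩ := hlam
  have hlub := hf.2 {K : Set L | IsDualIdeal K ∧ f K = lam} ⟨J, hJ, hv⟩ fun K hK => hK.1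
  have himg : f '' {K : Set L | IsDualIdeal K ∧ f K = lam} = {lam} := by
    apply Set.eq_singleton_iff_nonempty_unique_mem.mpr
    exact ⟨⟨f J, ⟨J, ⟨hJ, hv⟩, rfl⟩⟩, by rintro x ⟨K, hK, rfl⟩; exact hK.2⟩
  rw [himg] at hlub
  exact (hlub.unique isLUB_singleton).symm ▸ rfl

lemma Jlam_subset (hf : IsObservableFunction f) {lam : ℝ} (hlam : lam ∈ imf f)
    {J : Set L} (hJ : IsDualIdeal J) (hle : f J ≤ lam) : Jlam f lam ⊆ J := by
  have hJl := Jlam_DI hf hlam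
  have hvl := Jlam_val hf hlam
  have hlub := hf.2 {J, Jlam f lam} ⟨J, Or.inl rfl⟩
    (by rintro K (rfl | rfl); exacts [hJ, hJl])
  rw [Set.sInter_pair] at hlub
  have himg : f '' ({J, Jlam f lam} : Set (Set L)) = {f J, lam} := by
    rw [Set.image_pair, hvl]
  rw [himg] at hlub
  have hval : f (J ∩ Jlam f lam) = lam := by
    refine le_antisymm (hlub.2 ?_) (hlub.1 (Or.inr rfl))
    rintro x (rfl | rfl)
    · exact hle
    · exact le_rfl
  have hmem : J ∩ Jlam f lam ∈ {K : Set L | IsDualIdeal K ∧ f K = lam} := by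
    refine ⟨?_, hval⟩
    have := DI_sInter (S := {J, Jlam f lam}) ⟨J, Or.inl rfl⟩
      (by rintro K (rfl | rfl); exacts [hJ, hJl])
    rwa [Set.sInter_pair] at this
  exact (Set.sInter_subset_of_mem hmem).trans Set.inter_subset_left

lemma Jlam_anti (hf : IsObservableFunction f) {lam mu : ℝ} (hlam : lam ∈ imf f)
    (hmu : mu ∈ imf f) (hle : lam ≤ mu) : Jlam f mu ⊆ Jlam f lam :=
  Jlam_subset hf hmu (Jlam_DI hf hlam) ((Jlam_val hf hlam).le.trans hle)

lemma Eim_mono (hf : IsObservableFunction f) {lam mu : ℝ} (hlam : lam ∈ imf f)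
    (hmu : mu ∈ imf f) (hle : lam ≤ mu) : Eim f lam ≤ Eim f mu :=
  sInf_le_sInf (Jlam_anti hf hlam hmu hle)

lemma sSup_mem_imf (hf : IsObservableFunction f) {T : Set ℝ} (hT : T ⊆ imf f)
    (hTne : T.Nonempty) : sSup T ∈ imf f := by
  set S : Set (Set L) := {J : Set L | IsDualIdeal J ∧ f J ∈ T} with hS
  have hSne : S.Nonempty := by
    obtain ⟨mu, hmu⟩ := hTne
    obtain ⟨J, hJ, hv⟩ := hT hmu
    exact ⟨J, hJ, hv ▸ hmu⟩
  have hlub := hf.2 S hSne fun K hK => hK.1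
  have himg : f '' S = T := by
    apply Set.Subset.antisymm
    · rintro x ⟨K, hK, rfl⟩; exact hK.2
    · intro mu hmu
      obtain ⟨J, hJ, hv⟩ := hT hmu
      exact ⟨J, ⟨hJ, hv ▸ hmu⟩, hv⟩
  rw [himg] at hlub
  rw [hlub.csSup_eq hTne]
  exact ⟨⋂₀ S, DI_sInter hSne fun K hK => hK.1, rfl⟩



lemma KU_DI (hf : IsObservableFunction f) {T : Set ℝ} (hT : T ⊆ imf f)
    (hTne : T.Nonempty) : IsDualIdeal (⋃ mu ∈ T, Jlam f mu) := by
  obtain ⟨mu₀, hmu₀⟩ := hTne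
  refine ⟨⟨⊤, Set.mem_biUnion hmu₀ (top_mem_DI (Jlam_DI hf (hT hmu₀)))⟩, ?_, ?_, ?_⟩
  · intro hbot
    obtain ⟨mu, hmu, hb⟩ := Set.mem_iUnion₂.mp hbot
    exact (Jlam_DI hf (hT hmu)).2.1 hb
  · intro a ha b hb
    obtain ⟨mu, hmu, ha'⟩ := Set.mem_iUnion₂.mp ha
    obtain ⟨nu, hnu, hb'⟩ := Set.mem_iUnion₂.mp hb
    rcases le_total mu nu with h | h
    · have ha'' : a ∈ Jlam f mu := ha'
      have hb'' : b ∈ Jlam f mu := Jlam_anti hf (hT hmu) (hT hnu) h hb'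
      exact Set.mem_biUnion hmu ((Jlam_DI hf (hT hmu)).2.2.1 a ha'' b hb'')
    · have ha'' : a ∈ Jlam f nu := Jlam_anti hf (hT hnu) (hT hmu) h ha'
      exact Set.mem_biUnion hnu ((Jlam_DI hf (hT hnu)).2.2.1 a ha'' b hb')
  · intro a ha b hab
    obtain ⟨mu, hmu, ha'⟩ := Set.mem_iUnion₂.mp ha
    exact Set.mem_biUnion hmu ((Jlam_DI hf (hT hmu)).2.2.2 a ha' b hab)

lemma KU_val_le (hf : IsObservableFunction f) {T : Set ℝ} (hT : T ⊆ imf f)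
    (hTne : T.Nonempty) {mu : ℝ} (hmu : mu ∈ T) : f (⋃ nu ∈ T, Jlam f nu) ≤ mu := by
  have := f_anti hf (Jlam_DI hf (hT hmu)) (KU_DI hf hT hTne)
    (Set.subset_biUnion_of_mem hmu)
  rwa [Jlam_val hf (hT hmu)] at this

-- the effective value of Ef
lemma Ef_eq_Eim (hf : IsObservableFunction f) {lam : ℝ}
    (hne : (imf f ∩ Set.Iic lam).Nonempty) :
    Ef f lam = Eim f (sSup (imf f ∩ Set.Iic lam)) ∧
      sSup (imf f ∩ Set.Iic lam) ∈ imf f ∧ sSup (imf f ∩ Set.Iic lam) ≤ lam := by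
  have hbdd : BddAbove (imf f ∩ Set.Iic lam) := ⟨lam, fun x hx => hx.2⟩
  have hmem : sSup (imf f ∩ Set.Iic lam) ∈ imf f :=
    sSup_mem_imf hf Set.inter_subset_left hne
  have hle : sSup (imf f ∩ Set.Iic lam) ≤ lam := csSup_le hne fun x hx => hx.2
  refine ⟨?_, hmem, hle⟩
  by_cases hlam : lam ∈ imf f
  · have hsup : sSup (imf f ∩ Set.Iic lam) = lam :=
      le_antisymm hle (le_csSup hbdd ⟨hlam, Set.mem_Iic.mpr le_rfl⟩)
    rw [Ef, if_pos hlam, hsup]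
  · have hset : {mu : ℝ | mu ∈ imf f ∧ mu < lam} = imf f ∩ Set.Iic lam := by
      ext x
      constructor
      · rintro ⟨h1, h2⟩; exact ⟨h1, h2.le⟩
      · rintro ⟨h1, h2⟩
        exact ⟨h1, lt_of_le_of_ne h2 (by rintro rfl; exact hlam h1)⟩
    rw [Ef, if_neg hlam, hset, if_pos hne]

lemma Ef_eq_bot' (hf : IsObservableFunction f) {lam : ℝ}
    (hemp : imf f ∩ Set.Iic lam = ∅) : Ef f lam = ⊥ := by
  have hlam : lam ∉ imf f := fun h => Set.eq_empty_iff_forall_notMem.mp hemp lam ⟨h, Set.mem_Iic.mpr le_rfl⟩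
  have hS : ¬ ({mu : ℝ | mu ∈ imf f ∧ mu < lam}).Nonempty := by
    rintro ⟨x, h1, h2⟩
    exact Set.eq_empty_iff_forall_notMem.mp hemp x ⟨h1, h2.le⟩
  rw [Ef, if_neg hlam, if_neg hS]

lemma Ef_mono (hf : IsObservableFunction f) : Monotone (Ef f) := by
  intro lam mu hle
  by_cases hne : (imf f ∩ Set.Iic lam).Nonempty
  · have hne' : (imf f ∩ Set.Iic mu).Nonempty := by
      obtain ⟨x, h1, h2⟩ := hne; exact ⟨x, h1, h2.trans hle⟩
    obtain ⟨hE1, hm1, hl1⟩ := Ef_eq_Eim hf hne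
    obtain ⟨hE2, hm2, hl2⟩ := Ef_eq_Eim hf hne'
    rw [hE1, hE2]
    refine Eim_mono hf hm1 hm2 ?_
    exact csSup_le_csSup ⟨mu, fun x hx => hx.2⟩ hne
      (Set.inter_subset_inter_right _ (Set.Iic_subset_Iic.mpr hle))
  · rw [Ef_eq_bot' hf (Set.not_nonempty_iff_eq_empty.mp hne)]
    exact bot_le

lemma Ef_congr (hf : IsObservableFunction f) {lam mu : ℝ}
    (h : imf f ∩ Set.Iic lam = imf f ∩ Set.Iic mu) : Ef f lam = Ef f mu := by
  by_cases hne : (imf f ∩ Set.Iic lam).Nonempty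
  · rw [(Ef_eq_Eim hf hne).1, (Ef_eq_Eim hf (h ▸ hne)).1, h]
  · rw [Ef_eq_bot' hf (Set.not_nonempty_iff_eq_empty.mp hne),
      Ef_eq_bot' hf (h ▸ Set.not_nonempty_iff_eq_empty.mp hne)]

lemma Eim_eq (f : Set L → ℝ) (lam : ℝ) : Eim f lam = sInf (Jlam f lam) := rfl

end Aux

/-- The family `E^f` built from an abstract observable function `f` is a bounded
spectral family: monotone, right-continuous, and eventually `⊥` below and `⊤` above. -/
theorem stmt14 {L : Type*} [CompleteLattice L] (f : Set L → ℝ)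
    (hf : IsObservableFunction f) :
    Monotone (Ef f) ∧
    (∀ lam : ℝ, Ef f lam = ⨅ mu ∈ Set.Ioi lam, Ef f mu) ∧
    ∃ a b : ℝ, (∀ lam : ℝ, lam < a → Ef f lam = ⊥) ∧
      ∀ lam : ℝ, b ≤ lam → Ef f lam = ⊤ := by
  by_cases htriv : (⊥ : L) = ⊤
  · have hDI : ∀ J : Set L, ¬ IsDualIdeal J := by
      intro J hJ
      obtain ⟨⟨a, ha⟩, hbot, -, hup⟩ := hJ
      exact hbot (htriv ▸ hup a ha ⊤ le_top)
    have himf : imf f = ∅ :=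
      Set.eq_empty_iff_forall_notMem.mpr fun x ⟨J, hJ, _⟩ => hDI J hJ
    have hE : ∀ lam, Ef f lam = ⊥ := fun lam =>
      Ef_eq_bot' hf (by rw [himf, Set.empty_inter])
    refine ⟨fun a b _ => by rw [hE, hE], fun lam => ?_, 0, 0, fun lam _ => hE lam,
      fun lam _ => (hE lam).trans htriv⟩
    rw [hE]
    symm
    rw [eq_bot_iff]
    exact (iInf₂_le (lam + 1) (Set.mem_Ioi.mpr (lt_add_one lam))).trans (hE _).le
  · have hDItop : IsDualIdeal ({⊤} : Set L) := by
      refine ⟨⟨⊤, rfl⟩, fun h => htriv (Set.mem_singleton_iff.mp h), ?_, ?_⟩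
      · intro a ha b hb
        rw [Set.mem_singleton_iff] at *
        rw [ha, hb, inf_idem]
      · intro a ha b hab
        rw [Set.mem_singleton_iff] at *
        exact top_le_iff.mp (ha ▸ hab)
    have hM : f ({⊤} : Set L) ∈ imf f := ⟨{⊤}, hDItop, rfl⟩
    have hMub : ∀ mu ∈ imf f, mu ≤ f ({⊤} : Set L) := by
      rintro mu ⟨J, hJ, rfl⟩
      exact f_anti hf hDItop hJ (Set.singleton_subset_iff.mpr (top_mem_DI hJ))
    have himfne : (imf f).Nonempty := ⟨_, hM⟩
    constructor
    · exact Ef_mono hf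
    constructor
    · -- right continuity
      intro lam
      refine le_antisymm (le_iInf₂ fun mu hmu => Ef_mono hf (le_of_lt hmu)) ?_
      by_cases hTne : (imf f ∩ Set.Ioi lam).Nonempty
      · have hTsub : imf f ∩ Set.Ioi lam ⊆ imf f := Set.inter_subset_left
        have hbddT : BddBelow (imf f ∩ Set.Ioi lam) :=
          ⟨lam, fun x hx => (Set.mem_Ioi.mp hx.2).le⟩
        by_cases hacc : lam < sInf (imf f ∩ Set.Ioi lam)
        · set mu := (lam + sInf (imf f ∩ Set.Ioi lam)) / 2 with hmu
          have h1 : lam < mu := by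
            simp only [hmu]; linarith
          have h2 : mu < sInf (imf f ∩ Set.Ioi lam) := by
            simp only [hmu]; linarith
          have hseteq : imf f ∩ Set.Iic lam = imf f ∩ Set.Iic mu := by
            ext x
            refine ⟨fun hx => ⟨hx.1, (Set.mem_Iic.mp hx.2).trans h1.le⟩, fun hx => ⟨hx.1, ?_⟩⟩
            by_contra hgt
            rw [Set.mem_Iic, not_le] at hgt
            have hxT : x ∈ imf f ∩ Set.Ioi lam := ⟨hx.1, Set.mem_Ioi.mpr hgt⟩
            have := csInf_le hbddT hxT
            have := Set.mem_Iic.mp hx.2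
            linarith
          exact (iInf₂_le mu (Set.mem_Ioi.mpr h1)).trans (Ef_congr hf hseteq).symm.le
        · set K := ⋃ mu ∈ imf f ∩ Set.Ioi lam, Jlam f mu with hK
          have hKDI := KU_DI hf hTsub hTne
          have hκ : f K ∈ imf f := ⟨K, hKDI, rfl⟩
          have hκle : f K ≤ lam := by
            have h1 : f K ≤ sInf (imf f ∩ Set.Ioi lam) :=
              le_csInf hTne fun x hx => KU_val_le hf hTsub hTne hx
            exact h1.trans (not_lt.mp hacc)
          have hne : (imf f ∩ Set.Iic lam).Nonempty := ⟨f K, hκ, Set.mem_Iic.mpr hκle⟩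
          obtain ⟨hE, hmem, hle⟩ := Ef_eq_Eim hf hne
          rw [hE, Eim_eq]
          refine le_sInf fun a ha => ?_
          have haK : a ∈ K := by
            have hsub1 : Jlam f (sSup (imf f ∩ Set.Iic lam)) ⊆ Jlam f (f K) :=
              Jlam_anti hf hκ hmem
                (le_csSup ⟨lam, fun x hx => hx.2⟩ ⟨hκ, Set.mem_Iic.mpr hκle⟩)
            have hsub2 : Jlam f (f K) ⊆ K := Jlam_subset hf hκ hKDI le_rfl
            exact hsub2 (hsub1 ha)
          obtain ⟨mu, hmuT, ha'⟩ := Set.mem_iUnion₂.mp haK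
          refine (iInf₂_le mu hmuT.2).trans ?_
          rw [Ef, if_pos hmuT.1]
          exact sInf_le ha'
      · have hseteq : imf f ∩ Set.Iic lam = imf f ∩ Set.Iic (lam + 1) := by
          ext x
          refine ⟨fun hx => ⟨hx.1, (Set.mem_Iic.mp hx.2).trans (by linarith)⟩,
            fun hx => ⟨hx.1, ?_⟩⟩
          by_contra hgt
          rw [Set.mem_Iic, not_le] at hgt
          exact hTne ⟨x, hx.1, Set.mem_Ioi.mpr hgt⟩
        exact (iInf₂_le (lam + 1) (Set.mem_Ioi.mpr (lt_add_one lam))).trans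
          (Ef_congr hf hseteq).symm.le
    · -- bounds
      refine ⟨f (⋃ mu ∈ imf f, Jlam f mu), f ({⊤} : Set L), fun lam hlam => ?_,
        fun lam hlam => ?_⟩
      · refine Ef_eq_bot' hf (Set.eq_empty_iff_forall_notMem.mpr ?_)
        rintro x ⟨hx1, hx2⟩
        have := KU_val_le hf subset_rfl himfne hx1
        have := Set.mem_Iic.mp hx2
        linarith
      · have hne : (imf f ∩ Set.Iic lam).Nonempty := ⟨_, hM, Set.mem_Iic.mpr hlam⟩
        obtain ⟨hE, hmem, hle⟩ := Ef_eq_Eim hf hne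
        have hsup : sSup (imf f ∩ Set.Iic lam) = f ({⊤} : Set L) :=
          le_antisymm (csSup_le hne fun x hx => hMub x hx.1)
            (le_csSup ⟨lam, fun x hx => hx.2⟩ ⟨hM, Set.mem_Iic.mpr hlam⟩)
        rw [hE, hsup, Eim_eq]
        have hJeq : Jlam f (f ({⊤} : Set L)) = {⊤} :=
          Set.Subset.antisymm (Set.sInter_subset_of_mem ⟨hDItop, rfl⟩)
            (Set.singleton_subset_iff.mpr (top_mem_DI (Jlam_DI hf hM)))
        rw [hJeq, sInf_singleton]
end

section
/- Let L be a complete lattice and let r : L ∖ {⊥} → ℝ be a completely increasing function, i.e. r is bounded and r(⨆_{k∈K} P_k) = sup_{k∈K} r(P_k) for every nonempty family (P_k)_{k∈K} of elements of L ∖ {⊥}. Then the function f_r : D(L) → ℝ defined by f_r(J) := inf{r(P) | P ∈ J} is an abstract observable function, and f_r(H_P) = r(P) for every P ≠ ⊥. -/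
/-!
Complete increasingness applied to `{P, Q}` makes `r` monotone on `L ∖ {⊥}`, so the infimum
of `r` over `H_P` is attained at `P`. Upper semicontinuity is the approximation property of the
infimum. For the intersection condition, pick in each `J ∈ S` an element `P_J` with `r P_J`
within `ε` of `f_r(J)`: the join of the `P_J` lies in every `J`, hence in `⋂₀ S`, and `r` of it
is the supremum of the `r P_J`.
-/

open Set

/-- The paper's "completely increasing", without the boundedness requirement. -/
def CompletelyIncreasing {L : Type*} [CompleteLattice L] (r : L → ℝ) : Prop :=
  ∀ S : Set L, S.Nonempty → (∀ P ∈ S, P ≠ ⊥) → IsLUB (r '' S) (r (sSup S))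

section

variable {L : Type*} [CompleteLattice L] {r : L → ℝ}

namespace IsDualIdeal

variable {J : Set L}

theorem ne_bot_of_mem (hJ : IsDualIdeal J) {P : L} (hP : P ∈ J) : P ≠ ⊥ :=
  fun h => hJ.2.1 (h ▸ hP)

theorem top_mem (hJ : IsDualIdeal J) : (⊤ : L) ∈ J :=
  let ⟨a, ha⟩ := hJ.1
  hJ.2.2.2 a ha ⊤ le_top

theorem bddBelow_image (hJ : IsDualIdeal J) (hr : BddBelow (r '' {P | P ≠ ⊥})) :
    BddBelow (r '' J) :=
  hr.mono (image_mono fun _ => hJ.ne_bot_of_mem)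

theorem exists_mem_lt_of_sInf_image_lt (hJ : IsDualIdeal J) {b : ℝ}
    (hb : sInf (r '' J) < b) : ∃ P ∈ J, r P < b := by
  obtain ⟨_, ⟨P, hP, rfl⟩, hPb⟩ := exists_lt_of_csInf_lt (hJ.1.image r) hb
  exact ⟨P, hP, hPb⟩

end IsDualIdeal

theorem isDualIdeal_sInter {S : Set (Set L)} (hS : S.Nonempty)
    (hSd : ∀ J ∈ S, IsDualIdeal J) : IsDualIdeal (⋂₀ S) := by
  obtain ⟨J₁, hJ₁⟩ := hS
  refine ⟨⟨⊤, fun J hJ => (hSd J hJ).top_mem⟩, fun h => (hSd J₁ hJ₁).2.1 (h J₁ hJ₁),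
    fun a ha b hb J hJ => (hSd J hJ).2.2.1 a (ha J hJ) b (hb J hJ),
    fun a ha b hab J hJ => (hSd J hJ).2.2.2 a (ha J hJ) b hab⟩

namespace CompletelyIncreasing

theorem mono (hr : CompletelyIncreasing r) {P Q : L} (hP : P ≠ ⊥) (hPQ : P ≤ Q) :
    r P ≤ r Q := by
  have hQ : Q ≠ ⊥ := ne_bot_of_le_ne_bot hP hPQ
  have h := hr {P, Q} (insert_nonempty P {Q}) (by rintro x (rfl | rfl) <;> assumption)
  rw [sSup_pair, sup_eq_right.mpr hPQ] at h
  exact h.1 (mem_image_of_mem r (mem_insert P {Q}))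

theorem sInf_image_Ici (hr : CompletelyIncreasing r) {P : L} (hP : P ≠ ⊥) :
    sInf (r '' {b : L | P ≤ b}) = r P :=
  IsLeast.csInf_eq ⟨mem_image_of_mem r le_rfl, by
    rintro _ ⟨b, hb, rfl⟩
    exact hr.mono hP hb⟩

theorem sInf_image_sInter_le (hr : CompletelyIncreasing r) (hbdd : BddBelow (r '' {P | P ≠ ⊥}))
    {S : Set (Set L)} (hS : S.Nonempty) (hSd : ∀ J ∈ S, IsDualIdeal J) {b : ℝ}
    (hb : ∀ J ∈ S, sInf (r '' J) ≤ b) : sInf (r '' ⋂₀ S) ≤ b := by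
  refine le_of_forall_pos_le_add fun ε hε => ?_
  have hchoice : ∀ J : S, ∃ P ∈ (J : Set L), r P < b + ε := fun J =>
    (hSd J J.2).exists_mem_lt_of_sInf_image_lt ((hb J J.2).trans_lt (lt_add_of_pos_right b hε))
  choose P hPJ hPlt using hchoice
  have hQ : sSup (range P) ∈ ⋂₀ S := fun J hJ =>
    (hSd J hJ).2.2.2 _ (hPJ ⟨J, hJ⟩) _ (le_sSup (mem_range_self _))
  have hlub := hr (range P) (range_nonempty_iff_nonempty.mpr hS.to_subtype)
    (by rintro _ ⟨J, rfl⟩; exact (hSd J J.2).ne_bot_of_mem (hPJ J))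
  calc sInf (r '' ⋂₀ S) ≤ r (sSup (range P)) :=
        csInf_le ((isDualIdeal_sInter hS hSd).bddBelow_image hbdd) (mem_image_of_mem r hQ)
    _ ≤ b + ε := hlub.2 (by rintro _ ⟨_, ⟨J, rfl⟩, rfl⟩; exact (hPlt J).le)

end CompletelyIncreasing

theorem isObservableFunction_sInf_image (hr : CompletelyIncreasing r)
    (hbdd : BddBelow (r '' {P | P ≠ ⊥})) :
    IsObservableFunction (fun J : Set L => sInf (r '' J)) := by
  refine ⟨fun J₀ hJ₀ ε hε => ?_, fun S hS hSd => ⟨?_, fun b hb => ?_⟩⟩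
  · obtain ⟨P, hP, hPlt⟩ := hJ₀.exists_mem_lt_of_sInf_image_lt (lt_add_of_pos_right _ hε)
    exact ⟨P, hP, fun J hJ hPJ =>
      (csInf_le (hJ.bddBelow_image hbdd) (mem_image_of_mem r hPJ)).trans_lt hPlt⟩
  · rintro _ ⟨J, hJ, rfl⟩
    exact csInf_le_csInf ((hSd J hJ).bddBelow_image hbdd)
      ((isDualIdeal_sInter hS hSd).1.image r) (image_mono (sInter_subset_of_mem hJ))
  · exact hr.sInf_image_sInter_le hbdd hS hSd fun J hJ => hb (mem_image_of_mem _ hJ)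

end

/-- A bounded completely increasing function `r` on the nonzero elements of a
complete lattice induces an abstract observable function
`f_r(J) := inf {r(P) | P ∈ J}`, and `f_r(H_P) = r(P)` for all `P ≠ ⊥`. -/
theorem stmt15 {L : Type*} [CompleteLattice L] (r : L → ℝ)
    (hbdd : ∃ C : ℝ, ∀ P : L, P ≠ ⊥ → |r P| ≤ C)
    (hci : ∀ S : Set L, S.Nonempty → (∀ P ∈ S, P ≠ ⊥) →
      IsLUB (r '' S) (r (sSup S))) :
    IsObservableFunction (fun J : Set L => sInf (r '' J)) ∧
    ∀ P : L, P ≠ ⊥ → sInf (r '' {b : L | P ≤ b}) = r P := by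
  obtain ⟨C, hC⟩ := hbdd
  have hbdd' : BddBelow (r '' {P | P ≠ ⊥}) := by
    refine ⟨-C, ?_⟩
    rintro _ ⟨P, hP, rfl⟩
    exact neg_le_of_abs_le (hC P hP)
  exact ⟨isObservableFunction_sInf_image hci hbdd', fun P hP =>
    CompletelyIncreasing.sInf_image_Ici hci hP⟩
end

section
/- Let L be a complete lattice in which every element P ≠ ⊥ is contained in some quasipoint, and let f : Q(L) → ℝ be a bounded continuous function on the Stone spectrum of L. Define r_f(P) := sup{f(B) | B ∈ Q_P(L)} for P ∈ L ∖ {⊥}, and suppose r_f is completely increasing (r_f(⨆_k P_k) = sup_k r_f(P_k) for every nonempty family in L ∖ {⊥}). Then for every quasipoint B ∈ Q(L): f(B) = inf{r_f(P) | P ∈ B}; i.e. f coincides with the restriction to Q(L) of the observable function f_{r_f}(J) := inf_{P∈J} r_f(P). -/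
/-- A quasipoint (maximal filter base) in a complete lattice: a nonempty subset
not containing `⊥`, downward directed, and maximal among such subsets. -/
def IsQuasipoint {L : Type*} [CompleteLattice L] (B : Set L) : Prop :=
  B.Nonempty ∧ ⊥ ∉ B ∧ (∀ a ∈ B, ∀ b ∈ B, ∃ c ∈ B, c ≤ a ⊓ b) ∧
  ∀ C : Set L, ⊥ ∉ C → (∀ a ∈ C, ∀ b ∈ C, ∃ c ∈ C, c ≤ a ⊓ b) → B ⊆ C → B = C

/-- The Stone spectrum of a complete lattice. -/
def StoneSpectrum (L : Type*) [CompleteLattice L] : Type _ :=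
  {B : Set L // IsQuasipoint B}

/-- The basic sets `Q_P(L) = {B | P ∈ B}`. -/
def QSet {L : Type*} [CompleteLattice L] (P : L) : Set (StoneSpectrum L) :=
  {B : StoneSpectrum L | P ∈ B.1}

/-- The topology on the Stone spectrum generated by the sets `Q_P(L)`. -/
instance {L : Type*} [CompleteLattice L] : TopologicalSpace (StoneSpectrum L) :=
  TopologicalSpace.generateFrom (Set.range (QSet (L := L)))

/-- The function `r_f(P) := sup {f(B) | B ∈ Q_P(L)}` induced by a function `f`
on the Stone spectrum. -/
noncomputable def rInduced {L : Type*} [CompleteLattice L]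
    (f : StoneSpectrum L → ℝ) (P : L) : ℝ :=
  sSup (f '' QSet P)


/-! Since quasipoints are upward closed and downward directed, the sets `Q_P(L)` with `P ∈ B`
form a neighbourhood basis of `B`. Continuity of `f` at `B` therefore makes `sup f` over
`Q_P(L)` as close to `f(B)` as desired for a suitable `P ∈ B`, while `f(B)` is a lower bound. -/

open Filter Topology

lemma IsQuasipoint.mem_of_le {L : Type*} [CompleteLattice L] {B : Set L}
    (h : IsQuasipoint B) {a b : L} (ha : a ∈ B) (hab : a ≤ b) : b ∈ B := by
  obtain ⟨-, hbot, hdir, hmax⟩ := h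
  suffices hB : B = {x | ∃ c ∈ B, c ≤ x} from hB ▸ ⟨a, ha, hab⟩
  -- the upward closure of `B` is again a filter base, so it equals `B` by maximality
  refine hmax _ ?_ ?_ fun x hx => ⟨x, hx, le_rfl⟩
  · rintro ⟨c, hc, hc'⟩
    exact hbot (le_bot_iff.mp hc' ▸ hc)
  · rintro x ⟨cx, hcx, hcx'⟩ y ⟨cy, hcy, hcy'⟩
    obtain ⟨d, hd, hd'⟩ := hdir cx hcx cy hcy
    exact ⟨d, ⟨d, hd, le_rfl⟩, hd'.trans (inf_le_inf hcx' hcy')⟩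

namespace StoneSpectrum

variable {L : Type*} [CompleteLattice L]

lemma qSet_mono : Monotone (QSet (L := L)) :=
  fun _ _ hab B hB => B.2.mem_of_le hB hab

lemma nhds_eq (B : StoneSpectrum L) : 𝓝 B = ⨅ P ∈ B.1, 𝓟 (QSet P) := by
  rw [TopologicalSpace.nhds_generateFrom]
  simp only [Set.mem_ofPred_eq, and_comm (a := B ∈ _), iInf_and, Set.mem_range, iInf_exists]
  rw [iInf_comm]
  simp only [iInf_iInf_eq_right]
  rfl

lemma hasBasis_nhds (B : StoneSpectrum L) : (𝓝 B).HasBasis (· ∈ B.1) QSet := by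
  rw [nhds_eq]
  refine hasBasis_biInf_principal (fun a ha b hb => ?_) B.2.1
  obtain ⟨c, hc, hcab⟩ := B.2.2.2.1 a ha b hb
  exact ⟨c, hc, qSet_mono (hcab.trans inf_le_left), qSet_mono (hcab.trans inf_le_right)⟩

theorem isGLB_rInduced {f : StoneSpectrum L → ℝ} {B : StoneSpectrum L}
    (hf : ContinuousAt f B) (hbdd : BddAbove (Set.range f)) :
    IsGLB (rInduced f '' B.1) (f B) := by
  have hle : ∀ P ∈ B.1, f B ≤ rInduced f P := fun P hP =>
    le_csSup (hbdd.mono (Set.image_subset_range _ _)) ⟨B, hP, rfl⟩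
  refine ⟨Set.forall_mem_image.2 hle, fun w hw => le_of_forall_gt_imp_ge_of_dense fun m hm => ?_⟩
  obtain ⟨P, hP, hPm⟩ := (hasBasis_nhds B).mem_iff.1 (hf (Iio_mem_nhds hm))
  calc w ≤ rInduced f P := hw ⟨P, hP, rfl⟩
    _ ≤ m := csSup_le ⟨f B, B, hP, rfl⟩ (Set.forall_mem_image.2 fun B' hB' => (hPm hB').le)

end StoneSpectrum

theorem stmt16_general {L : Type*} [CompleteLattice L]
    (f : StoneSpectrum L → ℝ)
    (hcont : Continuous f)
    (hbdd : ∃ C : ℝ, ∀ B : StoneSpectrum L, |f B| ≤ C) :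
    ∀ B : StoneSpectrum L, IsGLB (rInduced f '' B.1) (f B) := by
  obtain ⟨C, hC⟩ := hbdd
  exact fun B => StoneSpectrum.isGLB_rInduced hcont.continuousAt
    ⟨C, Set.forall_mem_range.2 fun B' => (abs_le.1 (hC B')).2⟩

/-- Let `L` be a complete lattice in which every nonzero element lies in some
quasipoint, and let `f` be a bounded continuous function on the Stone spectrum
such that `r_f` is completely increasing. Then for every quasipoint `B`,
`f(B) = inf {r_f(P) | P ∈ B}`, i.e. `f` coincides with the restriction to the
Stone spectrum of the observable function induced by `r_f`. -/
theorem stmt16 {L : Type*} [CompleteLattice L]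
    (hqp : ∀ P : L, P ≠ ⊥ → ∃ B : Set L, IsQuasipoint B ∧ P ∈ B)
    (f : StoneSpectrum L → ℝ)
    (hcont : Continuous f)
    (hbdd : ∃ C : ℝ, ∀ B : StoneSpectrum L, |f B| ≤ C)
    (hci : ∀ S : Set L, S.Nonempty → (∀ P ∈ S, P ≠ ⊥) →
      IsLUB (rInduced f '' S) (rInduced f (sSup S))) :
    ∀ B : StoneSpectrum L, IsGLB (rInduced f '' B.1) (f B) :=
  stmt16_general f hcont hbdd
end

section
/- Let M be a Hausdorff topological space and let σ : ℝ → T(M) be a spectral family in the lattice T(M) of open subsets of M, with admissible domain D(σ) and induced function f_σ : D(σ) → ℝ. Define the resolvent set R(σ) := {λ ∈ ℝ | σ is constant on some neighborhood of λ} and the spectrum sp(σ) := ℝ ∖ R(σ). Then sp(σ) equals the closure in ℝ of the image of f_σ. -/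
/-- A spectral family in the lattice `T(M)` of open subsets of a topological
space `M`: open-valued, monotone, right-continuous, with
`interior (⋂ λ, σ λ) = ∅` and `⋃ λ, σ λ = M`. -/
def IsSpectralFamilyOfOpens {M : Type*} [TopologicalSpace M] (σ : ℝ → Set M) : Prop :=
  (∀ lam : ℝ, IsOpen (σ lam)) ∧ Monotone σ ∧
  (∀ lam : ℝ, σ lam = interior (⋂ mu ∈ Set.Ioi lam, σ mu)) ∧
  interior (⋂ lam : ℝ, σ lam) = ∅ ∧
  (⋃ lam : ℝ, σ lam) = Set.univ

/-- The admissible domain of a spectral family `σ` in `T(M)`: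
`D(σ) = M ∖ ⋂ λ, σ λ`. -/
def admDomain {M : Type*} [TopologicalSpace M] (σ : ℝ → Set M) : Set M :=
  (⋂ lam : ℝ, σ lam)ᶜ

/-- The function induced by a spectral family in `T(M)`:
`f_σ(x) = inf {λ | x ∈ σ(λ)}`. -/
noncomputable def inducedFun {M : Type*} [TopologicalSpace M] (σ : ℝ → Set M) (x : M) : ℝ :=
  sInf {lam : ℝ | x ∈ σ lam}

/-!
For `x ∈ D(σ)` the point `x` lies in `σ μ` for `μ > f_σ x` and not for `μ < f_σ x`, so `σ`
jumps at every value of `f_σ` and cannot be constant on an interval meeting the image of `f_σ`.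
Conversely, if an open interval `(a, b)` misses that image, every `x ∈ σ ν` with `ν < b` has
`f_σ x ≤ a` and hence lies in all `σ μ` with `μ ∈ (a, b)`, so `σ` is constant there.
-/

open Set

section

variable {M : Type*} [TopologicalSpace M] {σ : ℝ → Set M} {x : M}

theorem bddBelow_setOf_mem_of_mem_admDomain (hmono : Monotone σ) (hx : x ∈ admDomain σ) :
    BddBelow {lam | x ∈ σ lam} := by
  obtain ⟨μ, hμ⟩ : ∃ μ, x ∉ σ μ := by simpa [admDomain] using hx
  exact ⟨μ, fun lam hlam => le_of_not_gt fun hlt => hμ (hmono hlt.le hlam)⟩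

theorem inducedFun_le_of_mem (hmono : Monotone σ) (hx : x ∈ admDomain σ) {μ : ℝ}
    (h : x ∈ σ μ) : inducedFun σ x ≤ μ :=
  csInf_le (bddBelow_setOf_mem_of_mem_admDomain hmono hx) h

theorem mem_of_inducedFun_lt (hmono : Monotone σ) (hunion : ⋃ lam, σ lam = univ)
    (hx : x ∈ admDomain σ) {μ : ℝ} (h : inducedFun σ x < μ) : x ∈ σ μ := by
  have hne : {lam | x ∈ σ lam}.Nonempty := mem_iUnion.mp (hunion.symm ▸ mem_univ x)
  obtain ⟨lam, hlam, hlt⟩ :=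
    (csInf_lt_iff (bddBelow_setOf_mem_of_mem_admDomain hmono hx) hne).mp h
  exact hmono hlt.le hlam

theorem disjoint_Ioo_image_inducedFun (hmono : Monotone σ) (hunion : ⋃ lam, σ lam = univ)
    {a b : ℝ} {s : Set M} (hconst : ∀ μ ∈ Ioo a b, σ μ = s) :
    Disjoint (Ioo a b) (inducedFun σ '' admDomain σ) := by
  rw [disjoint_image_right, disjoint_left]
  rintro x ⟨hax, hxb⟩ hx
  have hlow : x ∉ σ ((a + inducedFun σ x) / 2) := fun h =>
    (inducedFun_le_of_mem hmono hx h).not_gt (by linarith)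
  have hhigh : x ∈ σ ((inducedFun σ x + b) / 2) :=
    mem_of_inducedFun_lt hmono hunion hx (by linarith)
  rw [hconst _ ⟨by linarith, by linarith⟩] at hlow hhigh
  exact hlow hhigh

theorem subset_of_disjoint_Ioo_image_inducedFun (hmono : Monotone σ)
    (hunion : ⋃ lam, σ lam = univ) {a b μ ν : ℝ}
    (hdisj : Disjoint (Ioo a b) (inducedFun σ '' admDomain σ)) (hμ : a < μ) (hν : ν < b) :
    σ ν ⊆ σ μ := by
  intro x hxν
  by_cases hx : x ∈ admDomain σ
  · have hfν : inducedFun σ x ≤ ν := inducedFun_le_of_mem hmono hx hxν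
    have hfa : inducedFun σ x ≤ a := le_of_not_gt fun haf =>
      disjoint_left.mp hdisj ⟨haf, by linarith⟩ (mem_image_of_mem _ hx)
    exact mem_of_inducedFun_lt hmono hunion hx (by linarith)
  · simp only [admDomain, mem_compl_iff, not_not, mem_iInter] at hx
    exact hx μ

theorem eq_of_disjoint_Ioo_image_inducedFun (hmono : Monotone σ)
    (hunion : ⋃ lam, σ lam = univ) {a b μ ν : ℝ}
    (hdisj : Disjoint (Ioo a b) (inducedFun σ '' admDomain σ)) (hμ : μ ∈ Ioo a b)
    (hν : ν ∈ Ioo a b) : σ μ = σ ν :=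
  (subset_of_disjoint_Ioo_image_inducedFun hmono hunion hdisj hν.1 hμ.2).antisymm
    (subset_of_disjoint_Ioo_image_inducedFun hmono hunion hdisj hμ.1 hν.2)

end

theorem stmt17_general {M : Type*} [TopologicalSpace M] (σ : ℝ → Set M)
    (hσ : IsSpectralFamilyOfOpens σ) :
    {lam : ℝ | ∃ U ∈ nhds lam, ∀ mu ∈ U, σ mu = σ lam}ᶜ =
      closure (inducedFun σ '' admDomain σ) := by
  obtain ⟨-, hmono, -, -, hunion⟩ := hσ
  ext lam
  rw [mem_compl_iff, not_iff_comm, mem_closure_iff_nhds_basis' (nhds_basis_Ioo lam)]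
  simp only [not_forall, not_nonempty_iff_eq_empty, ← disjoint_iff_inter_eq_empty,
    exists_prop, Prod.exists, mem_ofPred_eq]
  constructor
  · rintro ⟨a, b, ⟨hal, hlb⟩, hdisj⟩
    exact ⟨Ioo a b, Ioo_mem_nhds hal hlb, fun μ hμ =>
      eq_of_disjoint_Ioo_image_inducedFun hmono hunion hdisj hμ ⟨hal, hlb⟩⟩
  · rintro ⟨U, hU, hconst⟩
    obtain ⟨a, b, hlam, hsub⟩ := mem_nhds_iff_exists_Ioo_subset.mp hU
    exact ⟨a, b, hlam,
      disjoint_Ioo_image_inducedFun hmono hunion fun μ hμ => hconst μ (hsub hμ)⟩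

/-- The spectrum of a spectral family `σ` in `T(M)` (the complement of the set
of `λ` near which `σ` is locally constant) equals the closure of the image of
the induced function `f_σ : D(σ) → ℝ`. -/
theorem stmt17 {M : Type*} [TopologicalSpace M] [T2Space M] (σ : ℝ → Set M)
    (hσ : IsSpectralFamilyOfOpens σ) :
    {lam : ℝ | ∃ U ∈ nhds lam, ∀ mu ∈ U, σ mu = σ lam}ᶜ =
      closure (inducedFun σ '' admDomain σ) :=
  stmt17_general σ hσ
end

section
/- Let M be a Hausdorff topological space and let f : M → ℝ be a continuous function. Then σ_f(λ) := interior(f⁻¹((-∞, λ])) defines a continuous spectral family σ_f : ℝ → T(M), its admissible domain D(σ_f) equals M, and the function induced by σ_f is f itself: f_{σ_f}(x) = inf{λ | x ∈ σ_f(λ)} = f(x) for all x ∈ M. -/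
/-- A continuous spectral family in `T(M)`: `closure (σ λ) ⊆ σ μ` for `λ < μ`. -/
def IsContinuousSF {M : Type*} [TopologicalSpace M] (σ : ℝ → Set M) : Prop :=
  IsSpectralFamilyOfOpens σ ∧
  ∀ lam mu : ℝ, lam < mu → closure (σ lam) ⊆ σ mu

/-- Every continuous real function `f` on a Hausdorff space induces a continuous
spectral family `σ_f(λ) = int f⁻¹((-∞,λ])` in `T(M)`, whose admissible domain is
all of `M` and whose induced function is `f` itself. -/
theorem stmt18 {M : Type*} [TopologicalSpace M] [T2Space M] (f : M → ℝ)
    (hf : Continuous f) :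
    IsContinuousSF (fun lam : ℝ => interior (f ⁻¹' Set.Iic lam)) ∧
    admDomain (fun lam : ℝ => interior (f ⁻¹' Set.Iic lam)) = Set.univ ∧
    ∀ x : M, inducedFun (fun lam : ℝ => interior (f ⁻¹' Set.Iic lam)) x = f x := by

  set σ : ℝ → Set M := fun lam : ℝ => interior (f ⁻¹' Set.Iic lam) with hσ
  have hio : ∀ lam : ℝ, f ⁻¹' Set.Iio lam ⊆ σ lam := fun lam =>
    interior_maximal (Set.preimage_mono Set.Iio_subset_Iic_self)
      (IsOpen.preimage hf isOpen_Iio)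
  have hsub : ∀ lam : ℝ, σ lam ⊆ f ⁻¹' Set.Iic lam := fun lam => interior_subset
  have hopen : ∀ lam : ℝ, IsOpen (σ lam) := fun lam => isOpen_interior
  have hmono : Monotone σ := fun a b hab =>
    interior_mono (Set.preimage_mono (Set.Iic_subset_Iic.2 hab))
  have hIic : ∀ lam : ℝ, (⋂ mu ∈ Set.Ioi lam, σ mu) = f ⁻¹' Set.Iic lam := by
    intro lam
    apply subset_antisymm
    · intro x hx
      simp only [Set.mem_iInter] at hx
      simp only [Set.mem_preimage, Set.mem_Iic]
      by_contra h
      push_neg at h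
      have hm : (lam + f x) / 2 ∈ Set.Ioi lam := by
        simp only [Set.mem_Ioi]; linarith
      have := hsub _ (hx _ hm)
      simp only [Set.mem_preimage, Set.mem_Iic] at this
      linarith
    · intro x hx
      simp only [Set.mem_iInter]
      intro mu hmu
      exact hio mu (by simpa using lt_of_le_of_lt hx hmu)
  refine ⟨⟨⟨hopen, hmono, ?_, ?_, ?_⟩, ?_⟩, ?_, ?_⟩
  · intro lam; rw [hIic lam]
  · have : (⋂ lam : ℝ, σ lam) = ∅ := by
      apply Set.eq_empty_iff_forall_notMem.2
      intro x hx
      simp only [Set.mem_iInter] at hx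
      have := hsub _ (hx (f x - 1))
      simp only [Set.mem_preimage, Set.mem_Iic] at this
      linarith
    rw [this, interior_empty]
  · apply Set.eq_univ_iff_forall.2
    intro x
    exact Set.mem_iUnion.2 ⟨f x + 1, hio _ (by simp)⟩
  · intro lam mu hlm
    calc closure (σ lam) ⊆ closure (f ⁻¹' Set.Iic lam) := closure_mono (hsub lam)
      _ = f ⁻¹' Set.Iic lam := (IsClosed.preimage hf isClosed_Iic).closure_eq
      _ ⊆ f ⁻¹' Set.Iio mu := Set.preimage_mono (fun a ha => lt_of_le_of_lt ha hlm)
      _ ⊆ σ mu := hio mu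
  · have : (⋂ lam : ℝ, σ lam) = ∅ := by
      apply Set.eq_empty_iff_forall_notMem.2
      intro x hx
      simp only [Set.mem_iInter] at hx
      have := hsub _ (hx (f x - 1))
      simp only [Set.mem_preimage, Set.mem_Iic] at this
      linarith
    rw [admDomain, this, Set.compl_empty]
  · intro x
    have hS1 : Set.Ioi (f x) ⊆ {lam : ℝ | x ∈ σ lam} := fun lam hl =>
      hio lam (by simpa using hl)
    have hS2 : {lam : ℝ | x ∈ σ lam} ⊆ Set.Ici (f x) := fun lam hl => by
      have := hsub lam hl
      simpa using this
    have hne : {lam : ℝ | x ∈ σ lam}.Nonempty := ⟨f x + 1, hS1 (by simp)⟩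
    have hbdd : BddBelow {lam : ℝ | x ∈ σ lam} := ⟨f x, fun a ha => hS2 ha⟩
    refine le_antisymm ?_ (le_csInf hne (fun a ha => hS2 ha))
    have := csInf_le_csInf hbdd Set.nonempty_Ioi hS1
    rwa [csInf_Ioi] at this
end

section
/- Let M be a Hausdorff topological space and let σ : ℝ → T(M) be a continuous spectral family. Then the admissible domain D(σ) is an open (and dense) subset of M, the induced function f_σ : D(σ) → ℝ is continuous, and the spectral family induced by f_σ in the lattice T(D(σ)) of open subsets of D(σ) is the restriction of σ to D(σ): for all λ ∈ ℝ, interior_{D(σ)}(f_σ⁻¹((-∞, λ])) = σ(λ) ∩ D(σ). -/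
/-- Claim 1: if `f_σ(x) < λ` then `x ∈ σ λ`. -/
lemma mem_of_inducedFun_lt_s19 {M : Type*} [TopologicalSpace M] {σ : ℝ → Set M}
    (hσ : IsSpectralFamilyOfOpens σ) {x : M} {lam : ℝ}
    (h : inducedFun σ x < lam) : x ∈ σ lam := by
  obtain ⟨hopen, hmono, hrc, hint, huniv⟩ := hσ
  set S : Set ℝ := {mu : ℝ | x ∈ σ mu} with hS
  have hne : S.Nonempty := by
    have : x ∈ ⋃ l : ℝ, σ l := huniv ▸ Set.mem_univ x
    obtain ⟨l, hl⟩ := Set.mem_iUnion.mp this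
    exact ⟨l, hl⟩
  by_cases hb : BddBelow S
  · obtain ⟨mu, hmu, hmul⟩ := (csInf_lt_iff hb hne).mp h
    exact hmono hmul.le hmu
  · obtain ⟨mu, hmu, hmul⟩ := (not_bddBelow_iff).mp hb lam
    exact hmono hmul.le hmu

/-- Claim 2: if `x ∈ D(σ)` and `x ∈ σ λ` then `f_σ(x) ≤ λ`. -/
lemma inducedFun_le_of_mem_s19 {M : Type*} [TopologicalSpace M] {σ : ℝ → Set M}
    (hσ : IsSpectralFamilyOfOpens σ) {x : M} (hx : x ∈ admDomain σ) {lam : ℝ}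
    (h : x ∈ σ lam) : inducedFun σ x ≤ lam := by
  obtain ⟨hopen, hmono, hrc, hint, huniv⟩ := hσ
  have hx' : ∃ l : ℝ, x ∉ σ l := by
    by_contra hc
    push_neg at hc
    exact hx (Set.mem_iInter.mpr hc)
  obtain ⟨l₀, hl₀⟩ := hx'
  have hbdd : BddBelow {mu : ℝ | x ∈ σ mu} := by
    refine ⟨l₀, fun mu hmu => ?_⟩
    by_contra hlt
    push_neg at hlt
    exact hl₀ (hmono hlt.le hmu)
  exact csInf_le hbdd h

/-- For a continuous spectral family `σ` in `T(M)`: the admissible domain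
`D(σ)` is open and dense, the induced function `f_σ : D(σ) → ℝ` is continuous,
and the spectral family induced by `f_σ` in `T(D(σ))` is the restriction of
`σ` to `D(σ)`: the interior in `D(σ)` of `f_σ⁻¹((-∞,λ])` is `σ(λ) ∩ D(σ)`. -/
theorem stmt19 {M : Type*} [TopologicalSpace M] [T2Space M] (σ : ℝ → Set M)
    (hσ : IsContinuousSF σ) :
    IsOpen (admDomain σ) ∧ Dense (admDomain σ) ∧
    Continuous (fun x : admDomain σ => inducedFun σ x.1) ∧
    ∀ lam : ℝ,
      interior ((fun x : admDomain σ => inducedFun σ x.1) ⁻¹' Set.Iic lam) =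
        ((↑) : admDomain σ → M) ⁻¹' σ lam := by
  obtain ⟨hsf, hcl⟩ := hσ
  obtain ⟨hopen, hmono, hrc, hint, huniv⟩ := hsf
  -- the intersection is closed
  have hinter : (⋂ lam : ℝ, σ lam) = ⋂ lam : ℝ, closure (σ lam) := by
    apply Set.Subset.antisymm
    · exact Set.iInter_mono fun lam => subset_closure
    · intro x hx
      refine Set.mem_iInter.mpr fun lam => ?_
      have := Set.mem_iInter.mp hx (lam - 1)
      exact hcl (lam - 1) lam (by linarith) this
  have hclosed : IsClosed (⋂ lam : ℝ, σ lam) := by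
    rw [hinter]; exact isClosed_iInter fun lam => isClosed_closure
  have hDopen : IsOpen (admDomain σ) := hclosed.isOpen_compl
  refine ⟨hDopen, ?_, ?_, ?_⟩
  · -- dense
    rw [dense_iff_closure_eq, admDomain, closure_compl, hint, Set.compl_empty]
  · -- continuity
    rw [continuous_iff_continuousAt]
    intro a
    rw [ContinuousAt, Metric.tendsto_nhds]
    intro ε hε
    set c := inducedFun σ a.1 with hc
    have haU : a.1 ∈ σ (c + ε / 2) :=
      mem_of_inducedFun_lt_s19 ⟨hopen, hmono, hrc, hint, huniv⟩ (by linarith)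
    have haV : a.1 ∉ closure (σ (c - ε / 2)) := by
      intro hmem
      have : a.1 ∈ σ (c - ε / 4) := hcl _ _ (by linarith) hmem
      have := inducedFun_le_of_mem_s19 ⟨hopen, hmono, hrc, hint, huniv⟩ a.2 this
      linarith
    set W : Set M := σ (c + ε / 2) ∩ (closure (σ (c - ε / 2)))ᶜ with hW
    have hWopen : IsOpen W := (hopen _).inter isClosed_closure.isOpen_compl
    have haW : a.1 ∈ W := ⟨haU, haV⟩
    have hmem : (Subtype.val ⁻¹' W : Set (admDomain σ)) ∈ nhds a :=
      (hWopen.preimage continuous_subtype_val).mem_nhds haW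
    refine Filter.mem_of_superset hmem fun y hy => ?_
    obtain ⟨hyU, hyV⟩ := hy
    have h1 : inducedFun σ y.1 ≤ c + ε / 2 :=
      inducedFun_le_of_mem_s19 ⟨hopen, hmono, hrc, hint, huniv⟩ y.2 hyU
    have h2 : c - ε / 2 ≤ inducedFun σ y.1 := by
      by_contra hlt
      push_neg at hlt
      exact hyV (subset_closure
        (mem_of_inducedFun_lt_s19 ⟨hopen, hmono, hrc, hint, huniv⟩ hlt))
    simp only [Set.mem_setOf_eq, Real.dist_eq]
    rw [abs_lt]
    constructor <;> [linarith; linarith]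
  · -- the induced spectral family is the restriction
    intro lam
    apply Set.Subset.antisymm
    · intro x hx
      obtain ⟨s, hst, hsopen, hxs⟩ := mem_interior.mp hx
      obtain ⟨U, hUopen, hUs⟩ := isOpen_induced_iff.mp hsopen
      have hWopen : IsOpen (U ∩ admDomain σ) := hUopen.inter hDopen
      have hxW : x.1 ∈ U ∩ admDomain σ := by
        refine ⟨?_, x.2⟩
        have : x ∈ Subtype.val ⁻¹' U := hUs ▸ hxs
        exact this
      have hWsub : U ∩ admDomain σ ⊆ ⋂ mu ∈ Set.Ioi lam, σ mu := by
        intro y ⟨hyU, hyD⟩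
        refine Set.mem_iInter₂.mpr fun mu hmu => ?_
        have hys : (⟨y, hyD⟩ : admDomain σ) ∈ s := by
          rw [← hUs]; exact hyU
        have hfy : inducedFun σ y ≤ lam := hst hys
        exact mem_of_inducedFun_lt_s19 ⟨hopen, hmono, hrc, hint, huniv⟩
          (lt_of_le_of_lt hfy hmu)
      have : x.1 ∈ interior (⋂ mu ∈ Set.Ioi lam, σ mu) :=
        interior_maximal hWsub hWopen hxW
      rw [← hrc lam] at this
      exact this
    · apply interior_maximal
      · intro x hx
        exact inducedFun_le_of_mem_s19 ⟨hopen, hmono, hrc, hint, huniv⟩ x.2 hx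
      · exact (hopen lam).preimage continuous_subtype_val
end
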